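/- arXiv:2404.02400 — 9 statements merged into one kernel-verified Lean document; each statement's English description precedes it below -/
import Mathlib

section
/- For a real random variable X with mean μ and variance σ², E[(X - q)⁺] ≤ (μ - q + sqrt((μ - q)² + σ²)) / 2, where (x)⁺ = max(x, 0). -/
/-!
Since `x⁺ = (x + |x|) / 2`, we have `E[(X - q)⁺] = (μ - q + E|X - q|) / 2`, and by Jensen
`(E|X - q|)² ≤ E[(X - q)²] = (μ - q)² + σ²`.
-/

open MeasureTheory ProbabilityTheory Real

section

variable {Ω : Type*} [MeasurableSpace Ω] {P : Measure Ω} [IsProbabilityMeasure P] {Y : Ω → ℝ}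

lemma sq_integral_abs_le_integral_sq (hY : MemLp Y 2 P) :
    (∫ ω, |Y ω| ∂P) ^ 2 ≤ ∫ ω, Y ω ^ 2 ∂P := by
  have hvar := variance_nonneg |Y| P
  rw [variance_eq_sub hY.abs] at hvar
  simpa only [Pi.abs_apply, Pi.pow_apply, sq_abs, sub_nonneg] using hvar

lemma integral_abs_le_sqrt_sq_integral_add_variance (hY : MemLp Y 2 P) :
    ∫ ω, |Y ω| ∂P ≤ √(P[Y] ^ 2 + Var[Y; P]) := by
  have hsecond : ∫ ω, Y ω ^ 2 ∂P = P[Y] ^ 2 + Var[Y; P] := by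
    rw [variance_eq_sub hY]
    simp only [Pi.pow_apply]
    ring
  rw [← hsecond]
  exact le_sqrt_of_sq_le (sq_integral_abs_le_integral_sq hY)

lemma integral_max_zero_le (hY : MemLp Y 2 P) :
    ∫ ω, max (Y ω) 0 ∂P ≤ (P[Y] + √(P[Y] ^ 2 + Var[Y; P])) / 2 := by
  have hint : Integrable Y P := hY.integrable one_le_two
  have hmax : (fun ω ↦ max (Y ω) 0) = fun ω ↦ (Y ω + |Y ω|) / 2 := by
    funext ω
    have h := add_abs_eq_two_nsmul_posPart (Y ω)
    rw [two_nsmul, posPart_def] at h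
    linarith
  rw [hmax, integral_div, integral_add hint hint.abs]
  gcongr
  exact integral_abs_le_sqrt_sq_integral_add_variance hY

end

theorem scarf_bound_general {Ω : Type*} [MeasureSpace Ω]
    [IsProbabilityMeasure (ℙ : Measure Ω)]
    (X : Ω → ℝ) (μ σ q : ℝ)
    (hL2 : MemLp X 2 ℙ)
    (hmean : ∫ ω, X ω ∂ℙ = μ)
    (hvar : variance X ℙ = σ ^ 2) :
    ∫ ω, max (X ω - q) 0 ∂ℙ ≤ (μ - q + Real.sqrt ((μ - q) ^ 2 + σ ^ 2)) / 2 := by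
  have hmean_shift : ∫ ω, (X ω - q) ∂ℙ = μ - q := by
    rw [integral_sub (hL2.integrable one_le_two) (integrable_const q), hmean]
    simp
  have hvar_shift : Var[fun ω ↦ X ω - q; ℙ] = σ ^ 2 := by
    rw [variance_sub_const hL2.aestronglyMeasurable, hvar]
  simpa only [hmean_shift, hvar_shift] using
    integral_max_zero_le (Y := fun ω ↦ X ω - q) (hL2.sub (memLp_const q))

/-- Scarf's bound: `E[(X - q)⁺] ≤ (μ - q + sqrt((μ - q)² + σ²)) / 2`. -/
theorem scarf_bound {Ω : Type*} [MeasureSpace Ω]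
    [IsProbabilityMeasure (ℙ : Measure Ω)]
    (X : Ω → ℝ) (μ σ q : ℝ)
    (hmeas : Measurable X) (hL2 : MemLp X 2 ℙ)
    (hmean : ∫ ω, X ω ∂ℙ = μ)
    (hvar : variance X ℙ = σ ^ 2) :
    ∫ ω, max (X ω - q) 0 ∂ℙ ≤ (μ - q + Real.sqrt ((μ - q) ^ 2 + σ ^ 2)) / 2 :=
  scarf_bound_general X μ σ q hL2 hmean hvar
end

section
/- Fix σ > 0 and reals μₙ with q = Σ qₙ. Any maximizer (q₁,...,q_N) of ∏ₙ σₙ²/((μₙ - qₙ)² + σₙ²) subject to Σ qₙ = q and μₙ > qₙ for all n satisfies the equal range property: ((μₙ - qₙ)² + σₙ²)/(μₙ - qₙ) is the same value for all n. -/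
open Finset

lemma key_perturb (u v A B : ℝ) (hu : 0 < u) (hv : 0 < v) (hA : 0 < A) (hB : 0 < B)
    (h : ∀ t : ℝ, -v < t → t < u →
      (u^2+A)*(v^2+B) ≤ ((u-t)^2+A)*((v+t)^2+B)) :
    (u^2+A)/u = (v^2+B)/v := by
  have hc : (u^2+A)*v = (v^2+B)*u := by
    by_contra hcne
    set c := (u^2+A)*v - (v^2+B)*u with hcdef
    have hc0 : c ≠ 0 := sub_ne_zero.mpr hcne
    set D := u^2+A+v^2+B-4*u*v with hD
    set E := 2*(v-u) with hE
    set K := |D| + |E| + 1 with hK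
    have hKpos : 0 < K := by positivity
    set δ := min (min u v / 2) (min 1 (|c| / (2*K))) with hδ
    have habs : 0 < |c| := abs_pos.mpr hc0
    have hδpos : 0 < δ := by
      apply lt_min
      · positivity
      · apply lt_min
        · norm_num
        · positivity
    have hm1 : δ ≤ min u v / 2 := min_le_left _ _
    have hm2 : min u v ≤ u := min_le_left _ _
    have hm3 : min u v ≤ v := min_le_right _ _
    have hδu : δ < u := by linarith
    have hδv : δ < v := by linarith
    have hδ1 : δ ≤ 1 := le_trans (min_le_right _ _) (min_le_left _ _)
    have hδc : δ ≤ |c| / (2*K) := le_trans (min_le_right _ _) (min_le_right _ _)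
    have h2Kδ : 2*K*δ ≤ |c| := by
      rw [le_div_iff₀ (by positivity)] at hδc
      linarith
    -- common estimates
    have hDδ : D*δ^2 ≤ |D| * δ^2 := mul_le_mul_of_nonneg_right (le_abs_self D) (sq_nonneg δ)
    have hδ0 : (0:ℝ) ≤ δ := le_of_lt hδpos
    have hδ32 : δ^3 ≤ δ^2 := pow_le_pow_of_le_one hδ0 hδ1 (by norm_num)
    have h4 : δ^4 ≤ δ^2 := pow_le_pow_of_le_one hδ0 hδ1 (by norm_num)
    have hEδ : E*δ^3 ≤ |E| * δ^2 :=
      le_trans (mul_le_mul_of_nonneg_right (le_abs_self E) (by positivity))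
        (mul_le_mul_of_nonneg_left hδ32 (abs_nonneg E))
    have hEδ' : -(E*δ^3) ≤ |E| * δ^2 := by
      have : -E * δ^3 ≤ |E| * δ^3 := mul_le_mul_of_nonneg_right (neg_le_abs E) (by positivity)
      have h2 : |E| * δ^3 ≤ |E| * δ^2 := mul_le_mul_of_nonneg_left hδ32 (abs_nonneg E)
      linarith
    rcases lt_or_gt_of_ne hc0 with hneg | hpos
    · -- c < 0 : use t = δ
      have h1 := h δ (by linarith) hδu
      have hexp : ((u-δ)^2+A)*((v+δ)^2+B)
          = (u^2+A)*(v^2+B) + 2*c*δ + D*δ^2 + E*δ^3 + δ^4 := by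
        rw [hcdef, hD, hE]; ring
      have h2 : -(2*c)*δ ≤ D*δ^2 + E*δ^3 + δ^4 := by
        rw [hexp] at h1; linarith
      have h3 : -(2*c)*δ ≤ (K*δ)*δ := by
        have : K*δ*δ = |D| * δ^2 + |E| * δ^2 + δ^2 := by rw [hK]; ring
        linarith [this ▸ (by linarith : -(2*c)*δ ≤ |D| * δ^2 + |E| * δ^2 + δ^2)]
      have h5 : -(2*c) ≤ K*δ := le_of_mul_le_mul_right h3 hδpos
      have hcabs : |c| = -c := abs_of_neg hneg
      linarith
    · -- c > 0 : use t = -δ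
      have h1 := h (-δ) (by linarith) (by linarith)
      have hexp : ((u-(-δ))^2+A)*((v+(-δ))^2+B)
          = (u^2+A)*(v^2+B) - 2*c*δ + D*δ^2 - E*δ^3 + δ^4 := by
        rw [hcdef, hD, hE]; ring
      have h2 : (2*c)*δ ≤ D*δ^2 + -(E*δ^3) + δ^4 := by
        rw [hexp] at h1; linarith
      have h3 : (2*c)*δ ≤ (K*δ)*δ := by
        have : K*δ*δ = |D| * δ^2 + |E| * δ^2 + δ^2 := by rw [hK]; ring
        linarith [this ▸ (by linarith : (2*c)*δ ≤ |D| * δ^2 + |E| * δ^2 + δ^2)]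
      have h5 : (2*c) ≤ K*δ := le_of_mul_le_mul_right h3 hδpos
      have hcabs : |c| = c := abs_of_pos hpos
      linarith
  rw [div_eq_div_iff (ne_of_gt hu) (ne_of_gt hv)]
  exact hc

/-- Equal range property: any maximizer of `∏ₙ σₙ²/((μₙ - qₙ)² + σₙ²)` subject
to `Σ qₙ = q` and `μₙ > qₙ` has `((μₙ - qₙ)² + σₙ²)/(μₙ - qₙ)` constant in `n`. -/
theorem equal_range_of_maximizer
    (N : ℕ) (μ σ : Fin N → ℝ) (q : ℝ) (hσ : ∀ n, 0 < σ n)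
    (qs : Fin N → ℝ)
    (hsum : ∑ n, qs n = q) (hlt : ∀ n, qs n < μ n)
    (hmax : ∀ qs' : Fin N → ℝ, (∑ n, qs' n = q) → (∀ n, qs' n < μ n) →
      ∏ n, (σ n) ^ 2 / ((μ n - qs' n) ^ 2 + (σ n) ^ 2)
        ≤ ∏ n, (σ n) ^ 2 / ((μ n - qs n) ^ 2 + (σ n) ^ 2)) :
    ∀ n m : Fin N,
      ((μ n - qs n) ^ 2 + (σ n) ^ 2) / (μ n - qs n)
        = ((μ m - qs m) ^ 2 + (σ m) ^ 2) / (μ m - qs m) := by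
  intro n m
  rcases eq_or_ne n m with rfl | hnm
  · rfl
  set u := μ n - qs n with hu'
  set v := μ m - qs m with hv'
  have hu : 0 < u := sub_pos.mpr (hlt n)
  have hv : 0 < v := sub_pos.mpr (hlt m)
  have hA : 0 < (σ n)^2 := pow_pos (hσ n) 2
  have hB : 0 < (σ m)^2 := pow_pos (hσ m) 2
  apply key_perturb u v ((σ n)^2) ((σ m)^2) hu hv hA hB
  intro t htv htu
  -- the perturbed allocation
  set qs' : Fin N → ℝ := fun k => if k = n then qs n + t else if k = m then qs m - t else qs k
    with hqs'
  have hqs'n : qs' n = qs n + t := by simp [hqs']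
  have hqs'm : qs' m = qs m - t := by simp [hqs', hnm.symm]
  have hqs'k : ∀ k, k ≠ n → k ≠ m → qs' k = qs k := by
    intro k h1 h2; simp [hqs', h1, h2]
  have hsum' : ∑ k, qs' k = q := by
    have hrw : ∀ k, qs' k = qs k + ((if k = n then t else 0) + (if k = m then -t else 0)) := by
      intro k
      rcases eq_or_ne k n with rfl | h1
      · simp [hqs'n, hnm]
      · rcases eq_or_ne k m with rfl | h2
        · simp [hqs'm, h1]; ring
        · simp [hqs'k k h1 h2, h1, h2]
    rw [Finset.sum_congr rfl (fun k _ => hrw k)]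
    rw [Finset.sum_add_distrib, Finset.sum_add_distrib]
    simp [hsum]
  have hlt' : ∀ k, qs' k < μ k := by
    intro k
    rcases eq_or_ne k n with rfl | h1
    · rw [hqs'n]; linarith [htu]
    · rcases eq_or_ne k m with rfl | h2
      · rw [hqs'm]; linarith [htv]
      · rw [hqs'k k h1 h2]; exact hlt k
  have hprod := hmax qs' hsum' hlt'
  -- split products
  set f : (Fin N → ℝ) → Fin N → ℝ := fun g k => (σ k)^2 / ((μ k - g k)^2 + (σ k)^2) with hf
  have hmem : m ∈ Finset.univ.erase n := Finset.mem_erase.mpr ⟨hnm.symm, Finset.mem_univ m⟩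
  have split : ∀ g : Fin N → ℝ, ∏ k, f g k
      = f g n * (f g m * ∏ k ∈ (Finset.univ.erase n).erase m, f g k) := by
    intro g
    rw [← Finset.mul_prod_erase Finset.univ (f g) (Finset.mem_univ n),
        ← Finset.mul_prod_erase (Finset.univ.erase n) (f g) hmem]
  have hrest : ∏ k ∈ (Finset.univ.erase n).erase m, f qs' k
      = ∏ k ∈ (Finset.univ.erase n).erase m, f qs k := by
    apply Finset.prod_congr rfl
    intro k hk
    have h2 := (Finset.mem_erase.mp hk).1
    have h1 := (Finset.mem_erase.mp (Finset.mem_erase.mp hk).2).1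
    rw [hf]; simp only; rw [hqs'k k h1 h2]
  have hP : 0 < ∏ k ∈ (Finset.univ.erase n).erase m, f qs k := by
    apply Finset.prod_pos
    intro k _
    have := hσ k
    have h1 : 0 < (μ k - qs k)^2 + (σ k)^2 := by positivity
    positivity
  have hple : f qs' n * f qs' m ≤ f qs n * f qs m := by
    have h1 := hprod
    rw [show (∏ k, (σ k) ^ 2 / ((μ k - qs' k) ^ 2 + (σ k) ^ 2)) = ∏ k, f qs' k from rfl,
        show (∏ k, (σ k) ^ 2 / ((μ k - qs k) ^ 2 + (σ k) ^ 2)) = ∏ k, f qs k from rfl,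
        split qs', split qs, hrest] at h1
    have := le_of_mul_le_mul_right (by linarith [h1] : f qs' n * f qs' m * (∏ k ∈ (Finset.univ.erase n).erase m, f qs k) ≤ f qs n * f qs m * (∏ k ∈ (Finset.univ.erase n).erase m, f qs k)) hP
    exact this
  -- turn into denominator inequality
  have hdn : μ n - qs' n = u - t := by rw [hqs'n]; ring
  have hdm : μ m - qs' m = v + t := by rw [hqs'm]; ring
  have hden1 : 0 < (u - t)^2 + (σ n)^2 := add_pos_of_nonneg_of_pos (sq_nonneg _) hA
  have hden2 : 0 < (v + t)^2 + (σ m)^2 := add_pos_of_nonneg_of_pos (sq_nonneg _) hB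
  have hden3 : 0 < u^2 + (σ n)^2 := add_pos_of_nonneg_of_pos (sq_nonneg _) hA
  have hden4 : 0 < v^2 + (σ m)^2 := add_pos_of_nonneg_of_pos (sq_nonneg _) hB
  have hple2 : (σ n)^2 * (σ m)^2 / (((u-t)^2 + (σ n)^2) * ((v+t)^2 + (σ m)^2))
      ≤ (σ n)^2 * (σ m)^2 / ((u^2 + (σ n)^2) * (v^2 + (σ m)^2)) := by
    have e1 : f qs' n * f qs' m
        = (σ n)^2 * (σ m)^2 / (((u-t)^2 + (σ n)^2) * ((v+t)^2 + (σ m)^2)) := by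
      rw [hf]; simp only; rw [hdn, hdm, div_mul_div_comm]
    have e2 : f qs n * f qs m
        = (σ n)^2 * (σ m)^2 / ((u^2 + (σ n)^2) * (v^2 + (σ m)^2)) := by
      rw [hf]; simp only; rw [← hu', ← hv', div_mul_div_comm]
    rw [← e1, ← e2]; exact hple
  rw [div_le_div_iff₀ (mul_pos hden1 hden2) (mul_pos hden3 hden4)] at hple2
  have hkey : (u^2 + (σ n)^2) * (v^2 + (σ m)^2)
      ≤ ((u-t)^2 + (σ n)^2) * ((v+t)^2 + (σ m)^2) := by
    have hσσ : 0 < (σ n)^2 * (σ m)^2 := by positivity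
    nlinarith [hple2]
  linarith [hkey]
end

section
/- For all N ≥ 1, N·sqrt((1 - 2^{-1/N})/2^{-1/N}) ≤ sqrt(N), i.e., the independence-based correction factor sqrt((1 - 2^{-1/N})·2^{1/N}) is at most 1/sqrt(N). -/
open Real

/-- For all `N ≥ 1`, `N·√((1 - 2^{-1/N})/2^{-1/N}) ≤ √N`, i.e. the
independence-based correction factor is at most `1/√N`. -/
theorem correction_factor_le (N : ℕ) (hN : 1 ≤ N) :
    (N : ℝ) * Real.sqrt ((1 - (2 : ℝ) ^ (-(1 : ℝ) / N)) / (2 : ℝ) ^ (-(1 : ℝ) / N))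
      ≤ Real.sqrt N := by
  have hNpos : (0 : ℝ) < N := by exact_mod_cast hN
  set s : ℝ := (2 : ℝ) ^ ((1 : ℝ) / N) with hs_def
  have hspos : 0 < s := Real.rpow_pos_of_pos (by norm_num) _
  have hs1 : 1 ≤ s := Real.one_le_rpow (by norm_num) (by positivity)
  -- Bernoulli: 2 ≤ (1 + 1/N)^N
  have hbern : (2 : ℝ) ≤ (1 + 1 / N) ^ N := by
    have h0 : (0 : ℝ) ≤ 1 / (N : ℝ) := by positivity
    have hge : (-2 : ℝ) ≤ 1 / N := by linarith
    have h1 := one_add_mul_le_pow (a := (1 : ℝ) / N) hge N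
    have h2 : (N : ℝ) * (1 / N) = 1 := by field_simp
    nlinarith [h1, h2]
  have hs_le : s ≤ 1 + 1 / N := by
    have h1 : s ≤ ((1 + 1 / N) ^ N : ℝ) ^ ((1 : ℝ) / N) :=
      Real.rpow_le_rpow (by norm_num) hbern (by positivity)
    have h2 : ((1 + 1 / N) ^ N : ℝ) ^ ((1 : ℝ) / N) = 1 + 1 / N := by
      rw [← Real.rpow_natCast (1 + 1 / N) N, ← Real.rpow_mul (by positivity)]
      rw [mul_one_div, div_self (ne_of_gt hNpos), Real.rpow_one]
    rwa [h2] at h1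
  -- rewrite the negative exponent
  have hneg : (2 : ℝ) ^ (-(1 : ℝ) / N) = s⁻¹ := by
    rw [neg_div, Real.rpow_neg (by norm_num)]
  have hexpr : (1 - (2 : ℝ) ^ (-(1 : ℝ) / N)) / (2 : ℝ) ^ (-(1 : ℝ) / N) = s - 1 := by
    rw [hneg]
    field_simp
  rw [hexpr]
  rw [show ((N : ℝ) * Real.sqrt (s - 1)) = Real.sqrt ((N : ℝ) ^ 2 * (s - 1)) by
    rw [Real.sqrt_mul (by positivity), Real.sqrt_sq hNpos.le]]
  apply Real.sqrt_le_sqrt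
  have : (N : ℝ) ^ 2 * (s - 1) ≤ (N : ℝ) ^ 2 * (1 / N) := by
    apply mul_le_mul_of_nonneg_left (by linarith) (by positivity)
  calc (N : ℝ) ^ 2 * (s - 1) ≤ (N : ℝ) ^ 2 * (1 / N) := this
    _ = N := by field_simp
end

section
/- For a real random variable X with mean μ, variance σ², and β = Pr(X ≤ 0) ∈ (0,1), it holds that E[X⁺] ≤ μ(1 - β) + σ·sqrt(β(1 - β)), where X⁺ = max(X, 0). -/
/-! `E[X⁺] - μ(1 - β) = -Cov(X, 1_{X ≤ 0})`, and Cauchy–Schwarz bounds the absolute value of this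
covariance by `σ` times the standard deviation `√(β(1 - β))` of the Bernoulli variable `1_{X ≤ 0}`. -/

open MeasureTheory ProbabilityTheory Real

theorem sq_integral_mul_le_integral_sq_mul_integral_sq {α : Type*} {m : MeasurableSpace α}
    {ν : Measure α} {f g : α → ℝ} (hf : MemLp f 2 ν) (hg : MemLp g 2 ν) :
    (∫ a, f a * g a ∂ν) ^ 2 ≤ (∫ a, f a ^ 2 ∂ν) * ∫ a, g a ^ 2 ∂ν := by
  have inner_toLp {u v : α → ℝ} (hu : MemLp u 2 ν) (hv : MemLp v 2 ν) :
      inner ℝ (hu.toLp u) (hv.toLp v) = ∫ a, u a * v a ∂ν := by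
    rw [L2.inner_def]
    refine integral_congr_ae ?_
    filter_upwards [hu.coeFn_toLp, hv.coeFn_toLp] with a hua hva
    simp [hua, hva, mul_comm]
  have h := real_inner_mul_inner_self_le (hf.toLp f) (hg.toLp g)
  simpa only [inner_toLp, ← sq] using h

section Covariance

variable {Ω : Type*} {mΩ : MeasurableSpace Ω} {μ : Measure Ω} {X Y : Ω → ℝ}

theorem memLp_indicator_one [IsFiniteMeasure μ] {p : ENNReal} {s : Set Ω} (hs : MeasurableSet s) :
    MemLp (s.indicator 1 : Ω → ℝ) p μ :=
  (memLp_const 1).indicator hs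

theorem sq_covariance_le_variance_mul_variance [IsFiniteMeasure μ] (hX : MemLp X 2 μ)
    (hY : MemLp Y 2 μ) : cov[X, Y; μ] ^ 2 ≤ Var[X; μ] * Var[Y; μ] := by
  rw [covariance, variance_eq_integral hX.aemeasurable, variance_eq_integral hY.aemeasurable]
  exact sq_integral_mul_le_integral_sq_mul_integral_sq (hX.sub (memLp_const _))
    (hY.sub (memLp_const _))

theorem covariance_indicator_one_right [IsProbabilityMeasure μ] (hX : MemLp X 2 μ) {s : Set Ω}
    (hs : MeasurableSet s) :
    cov[X, s.indicator 1; μ] = ∫ ω in s, X ω ∂μ - μ[X] * μ.real s := by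
  have hprod : X * s.indicator 1 = s.indicator X := by
    ext ω; by_cases h : ω ∈ s <;> simp [h]
  rw [covariance_eq_sub hX (memLp_indicator_one hs), hprod, integral_indicator hs,
    integral_indicator_one hs]

theorem variance_indicator_one [IsProbabilityMeasure μ] {s : Set Ω} (hs : MeasurableSet s) :
    Var[s.indicator 1; μ] = μ.real s * (1 - μ.real s) := by
  have hsq : (s.indicator 1 : Ω → ℝ) ^ 2 = s.indicator 1 := by
    ext ω; by_cases h : ω ∈ s <;> simp [h]
  rw [variance_eq_sub (memLp_indicator_one hs), hsq, integral_indicator_one hs]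
  ring

end Covariance

theorem integral_max_zero_eq_integral_sub_setIntegral {α : Type*} {m : MeasurableSpace α}
    {ν : Measure α} {f : α → ℝ} (hf_meas : Measurable f) (hf : Integrable f ν) :
    ∫ a, max (f a) 0 ∂ν = ∫ a, f a ∂ν - ∫ a in {a | f a ≤ 0}, f a ∂ν := by
  have hS : MeasurableSet {a | f a ≤ 0} := hf_meas measurableSet_Iic
  have hmax : (fun a ↦ max (f a) 0) = fun a ↦ f a - {a | f a ≤ 0}.indicator f a := by
    ext a
    by_cases h : f a ≤ 0 <;> simp [h, le_of_not_ge]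
  rw [hmax, integral_sub hf (hf.indicator hS), integral_indicator hS]

theorem expected_plus_le_general {Ω : Type*} [MeasureSpace Ω]
    [IsProbabilityMeasure (ℙ : Measure Ω)]
    (X : Ω → ℝ) (μ σ β : ℝ)
    (hmeas : Measurable X) (hL2 : MemLp X 2 ℙ)
    (hmean : ∫ ω, X ω ∂ℙ = μ)
    (hvar : variance X ℙ = σ ^ 2) (hσ : 0 ≤ σ)
    (hβ : (ℙ {ω | X ω ≤ 0}).toReal = β) :
    ∫ ω, max (X ω) 0 ∂ℙ ≤ μ * (1 - β) + σ * Real.sqrt (β * (1 - β)) := by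
  set S := {ω | X ω ≤ 0}
  have hS : MeasurableSet S := hmeas measurableSet_Iic
  have hPS : (ℙ : Measure Ω).real S = β := hβ
  have hcov := covariance_indicator_one_right hL2 hS
  have hbound : |cov[X, S.indicator 1; ℙ]| ≤ σ * √(β * (1 - β)) := by
    have h := sq_covariance_le_variance_mul_variance hL2 (memLp_indicator_one hS)
    rw [hvar, variance_indicator_one hS, hPS] at h
    calc |cov[X, S.indicator 1; ℙ]| ≤ √(σ ^ 2 * (β * (1 - β))) := abs_le_sqrt h
      _ = σ * √(β * (1 - β)) := by rw [sqrt_mul (sq_nonneg σ), sqrt_sq hσ]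
  rw [integral_max_zero_eq_integral_sub_setIntegral hmeas (hL2.integrable one_le_two), hmean]
  rw [hmean, hPS] at hcov
  linarith [neg_abs_le cov[X, S.indicator 1; ℙ]]

/-- With `β = Pr(X ≤ 0) ∈ (0,1)`, `E[X⁺] ≤ μ(1 - β) + σ·√(β(1 - β))`. -/
theorem expected_plus_le {Ω : Type*} [MeasureSpace Ω]
    [IsProbabilityMeasure (ℙ : Measure Ω)]
    (X : Ω → ℝ) (μ σ β : ℝ)
    (hmeas : Measurable X) (hL2 : MemLp X 2 ℙ)
    (hmean : ∫ ω, X ω ∂ℙ = μ)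
    (hvar : variance X ℙ = σ ^ 2) (hσ : 0 ≤ σ)
    (hβ : (ℙ {ω | X ω ≤ 0}).toReal = β)
    (hβ0 : 0 < β) (hβ1 : β < 1) :
    ∫ ω, max (X ω) 0 ∂ℙ ≤ μ * (1 - β) + σ * Real.sqrt (β * (1 - β)) :=
  expected_plus_le_general X μ σ β hmeas hL2 hmean hvar hσ hβ
end

section
/- For a real random variable X with mean μ, variance σ², and β = Pr(X ≤ 0) ∈ (0,1), it holds that E[min(X, 0)] ≥ μβ - σ·sqrt(β(1 - β)). -/
/-!
With `A = {X ≤ 0}` we have `E[min(X, 0)] = E[X; A] = μβ + Cov(X, 1_A)`, and by Cauchy–Schwarz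
`|Cov(X, 1_A)| ≤ σ · √Var(1_A) = σ · √(β(1 - β))`.
-/

open MeasureTheory ProbabilityTheory Real

namespace ProbabilityTheory

variable {Ω : Type*} {mΩ : MeasurableSpace Ω} {μ : Measure Ω}

theorem abs_covariance_le_sqrt_mul_sqrt [IsFiniteMeasure μ] {X Y : Ω → ℝ}
    (hX : MemLp X 2 μ) (hY : MemLp Y 2 μ) :
    |cov[X, Y; μ]| ≤ √(Var[X; μ]) * √(Var[Y; μ]) := by
  have hX' : MemLp (fun ω ↦ X ω - μ[X]) (ENNReal.ofReal 2) μ := by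
    rw [ENNReal.ofReal_ofNat]; exact hX.sub (memLp_const μ[X])
  have hY' : MemLp (fun ω ↦ Y ω - μ[Y]) (ENNReal.ofReal 2) μ := by
    rw [ENNReal.ofReal_ofNat]; exact hY.sub (memLp_const μ[Y])
  have holder := integral_mul_norm_le_Lp_mul_Lq HolderConjugate.two_two hX' hY'
  simp only [norm_eq_abs, rpow_two, sq_abs, ← sqrt_eq_rpow] at holder
  rw [variance_eq_integral hX.aemeasurable, variance_eq_integral hY.aemeasurable]
  calc |cov[X, Y; μ]| ≤ ∫ ω, |X ω - μ[X]| * |Y ω - μ[Y]| ∂μ := by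
        simpa only [covariance, norm_eq_abs, abs_mul] using
          norm_integral_le_integral_norm (μ := μ) fun ω ↦ (X ω - μ[X]) * (Y ω - μ[Y])
    _ ≤ _ := holder

theorem variance_indicator_one [IsProbabilityMeasure μ] {s : Set Ω} (hs : MeasurableSet s) :
    Var[s.indicator 1; μ] = μ.real s * (1 - μ.real s) := by
  have hsq : s.indicator (1 : Ω → ℝ) ^ 2 = s.indicator 1 := by
    ext ω; by_cases h : ω ∈ s <;> simp [h]
  have h1 : MemLp (s.indicator (1 : Ω → ℝ)) 2 μ := (memLp_const 1).indicator hs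
  rw [variance_eq_sub h1, hsq, integral_indicator_one hs]
  ring

theorem covariance_indicator_one_right [IsProbabilityMeasure μ] {X : Ω → ℝ} {s : Set Ω}
    (hX : MemLp X 2 μ) (hs : MeasurableSet s) :
    cov[X, s.indicator 1; μ] = ∫ ω in s, X ω ∂μ - μ[X] * μ.real s := by
  have hprod : X * s.indicator 1 = s.indicator X := by
    ext ω; by_cases h : ω ∈ s <;> simp [h]
  have h1 : MemLp (s.indicator (1 : Ω → ℝ)) 2 μ := (memLp_const 1).indicator hs
  rw [covariance_eq_sub hX h1, hprod, integral_indicator hs,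
    integral_indicator_one hs]

theorem mul_measureReal_sub_le_setIntegral [IsProbabilityMeasure μ] {X : Ω → ℝ} {s : Set Ω}
    (hX : MemLp X 2 μ) (hs : MeasurableSet s) :
    μ[X] * μ.real s - √(Var[X; μ]) * √(μ.real s * (1 - μ.real s)) ≤ ∫ ω in s, X ω ∂μ := by
  have h1 : MemLp (s.indicator (1 : Ω → ℝ)) 2 μ := (memLp_const 1).indicator hs
  have h := abs_covariance_le_sqrt_mul_sqrt hX h1
  rw [covariance_indicator_one_right hX hs, variance_indicator_one hs] at h
  linarith [neg_abs_le (∫ ω in s, X ω ∂μ - μ[X] * μ.real s)]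

theorem integral_min_zero_eq_setIntegral {X : Ω → ℝ} (hX : Measurable X) :
    ∫ ω, min (X ω) 0 ∂μ = ∫ ω in {ω | X ω ≤ 0}, X ω ∂μ := by
  rw [← integral_indicator (measurableSet_le hX measurable_const)]
  congr 1 with ω
  by_cases h : X ω ≤ 0 <;> simp [h, le_of_lt, not_le.mp]

end ProbabilityTheory

theorem expected_min_ge_general {Ω : Type*} [MeasureSpace Ω]
    [IsProbabilityMeasure (ℙ : Measure Ω)]
    (X : Ω → ℝ) (μ σ β : ℝ)
    (hmeas : Measurable X) (hL2 : MemLp X 2 ℙ)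
    (hmean : ∫ ω, X ω ∂ℙ = μ)
    (hvar : variance X ℙ = σ ^ 2) (hσ : 0 ≤ σ)
    (hβ : (ℙ {ω | X ω ≤ 0}).toReal = β) :
    μ * β - σ * Real.sqrt (β * (1 - β)) ≤ ∫ ω, min (X ω) 0 ∂ℙ := by
  have h := mul_measureReal_sub_le_setIntegral (s := {ω | X ω ≤ 0}) hL2
    (measurableSet_le hmeas measurable_const)
  rwa [hvar, sqrt_sq hσ, measureReal_def, hβ, hmean,
    ← integral_min_zero_eq_setIntegral hmeas] at h

/-- With `β = Pr(X ≤ 0) ∈ (0,1)`, `E[min(X, 0)] ≥ μβ - σ·√(β(1 - β))`. -/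
theorem expected_min_ge {Ω : Type*} [MeasureSpace Ω]
    [IsProbabilityMeasure (ℙ : Measure Ω)]
    (X : Ω → ℝ) (μ σ β : ℝ)
    (hmeas : Measurable X) (hL2 : MemLp X 2 ℙ)
    (hmean : ∫ ω, X ω ∂ℙ = μ)
    (hvar : variance X ℙ = σ ^ 2) (hσ : 0 ≤ σ)
    (hβ : (ℙ {ω | X ω ≤ 0}).toReal = β)
    (hβ0 : 0 < β) (hβ1 : β < 1) :
    μ * β - σ * Real.sqrt (β * (1 - β)) ≤ ∫ ω, min (X ω) 0 ∂ℙ :=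
  expected_min_ge_general X μ σ β hmeas hL2 hmean hvar hσ hβ
end

section
/- The two-point distribution with Pr(X = μ - σ·sqrt((1-β)/β)) = β and Pr(X = μ + σ·sqrt(β/(1-β))) = 1 - β has mean μ, variance σ², and attains equality in E[X⁺] = μ(1 - β) + σ·sqrt(β(1 - β)), provided μ - σ·sqrt((1-β)/β) ≤ 0 < μ + σ·sqrt(β/(1-β)). -/
/-!
The masses `β` and `1 - β` add up to `1` and the atoms `L ≤ 0 < H` are distinct, so `X` is
almost surely one of them and every `∫ g ∘ X` equals `β g(L) + (1 - β) g(H)`. Since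
`β √((1-β)/β) = (1-β) √(β/(1-β)) = √(β(1-β))`, the deviations `L - μ` and `H - μ` cancel in
the mean, their squares average to `σ²`, and only the upper atom contributes to `E[X⁺]`.
-/

open MeasureTheory ProbabilityTheory Real

lemma Real.mul_sqrt_div_self {p : ℝ} (hp : 0 ≤ p) (q : ℝ) : p * √(q / p) = √(p * q) := by
  rw [sqrt_div' q hp, mul_div_left_comm, div_sqrt, sqrt_mul hp, mul_comm]

section TwoPoint

variable {Ω : Type*} [MeasurableSpace Ω] {P : Measure Ω} {X : Ω → ℝ} {a b : ℝ}

lemma ae_eq_or_eq_of_measure_add_eq_one [IsProbabilityMeasure P] (hX : Measurable X)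
    (hab : a ≠ b) (h : P {ω | X ω = a} + P {ω | X ω = b} = 1) :
    ∀ᵐ ω ∂P, X ω = a ∨ X ω = b := by
  have hdisj : Disjoint {ω | X ω = a} {ω | X ω = b} :=
    Set.disjoint_left.2 fun ω (ha : X ω = a) (hb : X ω = b) => hab (ha ▸ hb)
  have hmeas : MeasurableSet ({ω | X ω = a} ∪ {ω | X ω = b}) :=
    (hX (measurableSet_singleton a)).union (hX (measurableSet_singleton b))
  rw [← measure_union hdisj (hX (measurableSet_singleton b))] at h
  rw [ae_iff, show {ω | ¬(X ω = a ∨ X ω = b)} = ({ω | X ω = a} ∪ {ω | X ω = b})ᶜ by ext; simp,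
    prob_compl_eq_zero_iff hmeas]
  exact h

lemma integral_comp_eq_of_ae_eq_or_eq [IsFiniteMeasure P] (hX : Measurable X) (hab : a ≠ b)
    (hae : ∀ᵐ ω ∂P, X ω = a ∨ X ω = b) (g : ℝ → ℝ) :
    ∫ ω, g (X ω) ∂P = P.real {ω | X ω = a} * g a + P.real {ω | X ω = b} * g b := by
  have hA : MeasurableSet {ω | X ω = a} := hX (measurableSet_singleton a)
  have hB : MeasurableSet {ω | X ω = b} := hX (measurableSet_singleton b)
  have hsplit : (fun ω => g (X ω)) =ᵐ[P] fun ω =>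
      {ω | X ω = a}.indicator (fun _ => g a) ω + {ω | X ω = b}.indicator (fun _ => g b) ω := by
    filter_upwards [hae] with ω hω
    rcases hω with h | h
    · simp [Set.indicator, h, hab]
    · simp [Set.indicator, h, hab.symm]
  rw [integral_congr_ae hsplit, integral_add ((integrable_const _).indicator hA)
    ((integrable_const _).indicator hB), integral_indicator_const _ hA,
    integral_indicator_const _ hB, smul_eq_mul, smul_eq_mul]

lemma integral_comp_of_two_point [IsProbabilityMeasure P] (hX : Measurable X) (hab : a ≠ b)
    {p : ℝ} (hp0 : 0 ≤ p) (hp1 : p ≤ 1) (ha : P {ω | X ω = a} = ENNReal.ofReal p)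
    (hb : P {ω | X ω = b} = ENNReal.ofReal (1 - p)) (g : ℝ → ℝ) :
    ∫ ω, g (X ω) ∂P = p * g a + (1 - p) * g b := by
  have hae := ae_eq_or_eq_of_measure_add_eq_one hX hab <| by
    rw [ha, hb, ← ENNReal.ofReal_add hp0 (sub_nonneg.2 hp1), add_sub_cancel, ENNReal.ofReal_one]
  rw [integral_comp_eq_of_ae_eq_or_eq hX hab hae, measureReal_def, measureReal_def, ha, hb,
    ENNReal.toReal_ofReal hp0, ENNReal.toReal_ofReal (sub_nonneg.2 hp1)]

end TwoPoint

section Moments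

variable {μ σ β : ℝ}

lemma two_point_mean (hβ0 : 0 < β) (hβ1 : β < 1) :
    β * (μ - σ * √((1 - β) / β)) + (1 - β) * (μ + σ * √(β / (1 - β))) = μ := by
  have hL := mul_sqrt_div_self hβ0.le (1 - β)
  have hH := mul_sqrt_div_self (sub_nonneg.2 hβ1.le) β
  rw [mul_comm (1 - β) β] at hH
  linear_combination (-σ) * hL + σ * hH

lemma two_point_variance (hβ0 : 0 < β) (hβ1 : β < 1) :
    β * (μ - σ * √((1 - β) / β) - μ) ^ 2 + (1 - β) * (μ + σ * √(β / (1 - β)) - μ) ^ 2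
      = σ ^ 2 := by
  have hβ1' : 0 < 1 - β := sub_pos.2 hβ1
  rw [sub_sub_cancel_left, add_sub_cancel_left, neg_sq, mul_pow, mul_pow,
    sq_sqrt (div_nonneg hβ1'.le hβ0.le), sq_sqrt (div_nonneg hβ0.le hβ1'.le)]
  field_simp
  ring

lemma two_point_upper_mass (hβ1 : β < 1) :
    (1 - β) * (μ + σ * √(β / (1 - β))) = μ * (1 - β) + σ * √(β * (1 - β)) := by
  have hH := mul_sqrt_div_self (sub_nonneg.2 hβ1.le) β
  rw [mul_comm (1 - β) β] at hH
  linear_combination σ * hH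

end Moments

theorem two_point_attains_bound_general {Ω : Type*} [MeasureSpace Ω]
    [IsProbabilityMeasure (ℙ : Measure Ω)]
    (X : Ω → ℝ) (μ σ β : ℝ) (hβ0 : 0 < β) (hβ1 : β < 1)
    (hmeas : Measurable X)
    (hL : ℙ {ω | X ω = μ - σ * Real.sqrt ((1 - β) / β)} = ENNReal.ofReal β)
    (hH : ℙ {ω | X ω = μ + σ * Real.sqrt (β / (1 - β))} = ENNReal.ofReal (1 - β))
    (hLneg : μ - σ * Real.sqrt ((1 - β) / β) ≤ 0)
    (hHpos : 0 < μ + σ * Real.sqrt (β / (1 - β))) :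
    (∫ ω, X ω ∂ℙ = μ)
      ∧ variance X ℙ = σ ^ 2
      ∧ ∫ ω, max (X ω) 0 ∂ℙ = μ * (1 - β) + σ * Real.sqrt (β * (1 - β)) := by
  have hE := integral_comp_of_two_point hmeas (hLneg.trans_lt hHpos).ne hβ0.le hβ1.le hL hH
  have hmean : ∫ ω, X ω ∂ℙ = μ := (hE id).trans (two_point_mean hβ0 hβ1)
  refine ⟨hmean, ?_, ?_⟩
  · rw [variance_eq_integral hmeas.aemeasurable, hmean, hE fun x => (x - μ) ^ 2]
    exact two_point_variance hβ0 hβ1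
  · rw [hE fun x => max x 0, max_eq_right hLneg, max_eq_left hHpos.le, mul_zero, zero_add]
    exact two_point_upper_mass hβ1

/-- The two-point distribution with `Pr(X = μ - σ√((1-β)/β)) = β` and
`Pr(X = μ + σ√(β/(1-β))) = 1 - β` has mean `μ`, variance `σ²`, and attains
equality `E[X⁺] = μ(1-β) + σ√(β(1-β))`, provided `L ≤ 0 < H`. -/
theorem two_point_attains_bound {Ω : Type*} [MeasureSpace Ω]
    [IsProbabilityMeasure (ℙ : Measure Ω)]
    (X : Ω → ℝ) (μ σ β : ℝ) (hσ : 0 < σ) (hβ0 : 0 < β) (hβ1 : β < 1)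
    (hmeas : Measurable X)
    (hL : ℙ {ω | X ω = μ - σ * Real.sqrt ((1 - β) / β)} = ENNReal.ofReal β)
    (hH : ℙ {ω | X ω = μ + σ * Real.sqrt (β / (1 - β))} = ENNReal.ofReal (1 - β))
    (hLneg : μ - σ * Real.sqrt ((1 - β) / β) ≤ 0)
    (hHpos : 0 < μ + σ * Real.sqrt (β / (1 - β))) :
    (∫ ω, X ω ∂ℙ = μ)
      ∧ variance X ℙ = σ ^ 2
      ∧ ∫ ω, max (X ω) 0 ∂ℙ = μ * (1 - β) + σ * Real.sqrt (β * (1 - β)) :=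
  two_point_attains_bound_general X μ σ β hβ0 hβ1 hmeas hL hH hLneg hHpos
end

section
/- Let ξ be a binomial-type sum: ξ = (N - t)L + tH where t ~ Binomial(N, 1-β), L = μ - σ·sqrt((1-β)/β), H = μ + σ·sqrt(β/(1-β)). If β ∈ [δ_k, δ_{k-1}] (so that (N-t)L + tH > 0 iff t ≥ k), then E[ξ⁺] = Nσ·sqrt(β(1-β))·C(N-1, k-1)·(1-β)^{k-1}β^{N-k} + Nμ·Σ_{t=k}^{N} C(N,t)·β^{N-t}(1-β)^t. -/
/-!
On `{t = j}` the payoff `(N - j)L + jH` equals `Nμ + σ√(β(1-β)) (jβ - (N - j)(1-β)) / (β(1-β))`,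
and its positive part keeps exactly the terms `j ≥ k`. The `μ`-part is the binomial tail. For the
other part, `j·C(N,j) = N·C(N-1,j-1)` and `(N-j)·C(N,j) = N·C(N-1,j)` turn each summand into a
difference of consecutive `Binomial(N - 1)` weights, and the sum telescopes to its first term.
-/

open MeasureTheory ProbabilityTheory Real Finset

lemma integral_comp_eq_sum_range {Ω : Type*} [MeasurableSpace Ω] (μ : Measure Ω)
    [IsFiniteMeasure μ] {t : Ω → ℕ} (ht : Measurable t) {N : ℕ} (htN : ∀ ω, t ω ≤ N)
    (g : ℕ → ℝ) :
    ∫ ω, g (t ω) ∂μ = ∑ j ∈ range (N + 1), g j * μ.real {ω | t ω = j} := by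
  have hlevel : ∀ j, MeasurableSet {ω | t ω = j} := fun j => ht (measurableSet_singleton j)
  have hsplit : (fun ω => g (t ω))
      = fun ω => ∑ j ∈ range (N + 1), {ω' | t ω' = j}.indicator (fun _ => g j) ω := by
    ext ω
    rw [sum_eq_single_of_mem (t ω) (mem_range_succ_iff.mpr (htN ω))]
    · simp
    · intro j _ hj
      exact Set.indicator_of_notMem (Ne.symm hj) _
  rw [hsplit, integral_finsetSum _ fun j _ => (integrable_const (g j)).indicator (hlevel j)]
  refine sum_congr rfl fun j _ => ?_
  rw [integral_indicator_const _ (hlevel j), smul_eq_mul, mul_comm]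

lemma sum_range_max_zero_mul {f w : ℕ → ℝ} {k N : ℕ} (hf : ∀ j ≤ N, 0 < f j ↔ k ≤ j) :
    ∑ j ∈ range (N + 1), max (f j) 0 * w j = ∑ j ∈ Icc k N, f j * w j := by
  have hIcc : Icc k N = (range (N + 1)).filter (k ≤ ·) := by
    ext j
    simp only [mem_Icc, mem_filter, mem_range]
    omega
  rw [hIcc, sum_filter]
  refine sum_congr rfl fun j hj => ?_
  have hfj := hf j (mem_range_succ_iff.mp hj)
  split_ifs with hkj
  · rw [max_eq_left (hfj.mpr hkj).le]
  · rw [max_eq_right (not_lt.mp (mt hfj.mp hkj)), zero_mul]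

lemma sqrt_div_eq_sqrt_mul_div (x : ℝ) {y : ℝ} (hy : 0 < y) : √(x / y) = √(x * y) / y := by
  calc √(x / y) = √(x * y / y ^ 2) := by congr 1; field_simp
    _ = √(x * y) / y := by rw [sqrt_div' _ (sq_nonneg y), sqrt_sq hy.le]

section BinomialWeight

variable {R : Type*} [CommRing R]

def binomialWeight (n : ℕ) (x y : R) (j : ℕ) : R := n.choose j * x ^ (n - j) * y ^ j

lemma natCast_mul_binomialWeight {N j : ℕ} (hj : 1 ≤ j) (x y : R) :
    (j : R) * binomialWeight N x y j = N * y * binomialWeight (N - 1) x y (j - 1) := by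
  obtain ⟨i, rfl⟩ := Nat.exists_eq_add_of_le' hj
  rcases N with _ | n
  · simp [binomialWeight]
  have hchoose := congrArg (Nat.cast : ℕ → R) (Nat.add_one_mul_choose_eq n i)
  push_cast at hchoose
  simp only [binomialWeight, Nat.add_sub_cancel, Nat.add_sub_add_right]
  push_cast
  linear_combination (x ^ (n - i) * y ^ (i + 1)) * hchoose.symm

lemma sub_natCast_mul_binomialWeight {N j : ℕ} (hj : j ≤ N) (x y : R) :
    ((N : R) - j) * binomialWeight N x y j = N * x * binomialWeight (N - 1) x y j := by
  rcases N with _ | n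
  · simp [Nat.le_zero.mp hj]
  rcases hj.eq_or_lt with rfl | hjn
  · simp [binomialWeight]
  have hchoose := congrArg (Nat.cast : ℕ → R) (Nat.choose_mul_succ_eq n j)
  push_cast [Nat.cast_sub hj] at hchoose
  have hpow : x ^ (n + 1 - j) = x * x ^ (n - j) := by
    rw [← pow_succ', Nat.sub_add_comm (Nat.lt_succ_iff.mp hjn)]
  simp only [binomialWeight, Nat.add_sub_cancel, hpow]
  push_cast
  linear_combination (x * x ^ (n - j) * y ^ j) * hchoose.symm

/-- For `x + y = 1` the factor `j x - (N - j) y` is the centred value `j - N y`; the homogeneous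
form makes the identity hold in any commutative ring. -/
lemma sum_Icc_mul_sub_mul_binomialWeight {N k : ℕ} (hk : 1 ≤ k) (hkN : k ≤ N) (x y : R) :
    ∑ j ∈ Icc k N, ((j : R) * x - ((N : R) - j) * y) * binomialWeight N x y j
      = N * x * y * binomialWeight (N - 1) x y (k - 1) := by
  have hterm : ∀ j ∈ Icc k N, ((j : R) * x - ((N : R) - j) * y) * binomialWeight N x y j
      = N * x * y * (binomialWeight (N - 1) x y (j - 1) - binomialWeight (N - 1) x y j) := by
    intro j hj
    obtain ⟨hkj, hjN⟩ := mem_Icc.mp hj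
    linear_combination x * natCast_mul_binomialWeight (N := N) (hk.trans hkj) x y
      - y * sub_natCast_mul_binomialWeight hjN x y
  have hlast : binomialWeight (N - 1) x y N = 0 := by
    simp [binomialWeight, Nat.choose_eq_zero_of_lt (Nat.sub_lt (hk.trans hkN) one_pos)]
  have htelescope := sum_Icc_sub hkN fun j => -binomialWeight (N - 1) x y (j - 1)
  simp only [Nat.add_sub_cancel, neg_sub_neg] at htelescope
  rw [sum_congr rfl hterm, ← mul_sum, htelescope, hlast, sub_zero]

end BinomialWeight

theorem expected_loss_piecewise_general {Ω : Type*} [MeasureSpace Ω]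
    [IsProbabilityMeasure (ℙ : Measure Ω)]
    (N k : ℕ) (hk1 : 1 ≤ k) (hkN : k ≤ N)
    (β μ σ : ℝ) (hβ0 : 0 < β) (hβ1 : β < 1)
    (t : Ω → ℕ) (hmeas : Measurable t) (htN : ∀ ω, t ω ≤ N)
    (hbin : ∀ j : ℕ, j ≤ N →
      ℙ {ω | t ω = j} = ENNReal.ofReal ((N.choose j : ℝ) * β ^ (N - j) * (1 - β) ^ j))
    (L H : ℝ)
    (hL : L = μ - σ * Real.sqrt ((1 - β) / β))
    (hH : H = μ + σ * Real.sqrt (β / (1 - β)))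
    (hthreshold : ∀ j : ℕ, j ≤ N → (0 < ((N : ℝ) - j) * L + j * H ↔ k ≤ j)) :
    ∫ ω, max (((N : ℝ) - t ω) * L + (t ω : ℝ) * H) 0 ∂ℙ
      = N * σ * Real.sqrt (β * (1 - β)) *
          ((N - 1).choose (k - 1) : ℝ) * (1 - β) ^ (k - 1) * β ^ (N - k)
        + N * μ * ∑ j ∈ Finset.Icc k N,
            (N.choose j : ℝ) * β ^ (N - j) * (1 - β) ^ j := by
  have hq : 0 < 1 - β := sub_pos.mpr hβ1
  have hlaw : ∀ j ∈ range (N + 1),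
      (ℙ : Measure Ω).real {ω | t ω = j} = binomialWeight N β (1 - β) j := by
    intro j hj
    rw [measureReal_def, hbin j (mem_range_succ_iff.mp hj), ENNReal.toReal_ofReal (by positivity)]
    rfl
  have hpayoff : ∀ j : ℕ,
      ((N : ℝ) - j) * L + j * H
        = N * μ + σ * √(β * (1 - β)) / (β * (1 - β)) * (j * β - (N - j) * (1 - β)) := by
    intro j
    rw [hL, hH, sqrt_div_eq_sqrt_mul_div _ hβ0, sqrt_div_eq_sqrt_mul_div _ hq, mul_comm (1 - β) β]
    field_simp
    ring
  rw [integral_comp_eq_sum_range ℙ hmeas htN fun j => max (((N : ℝ) - j) * L + j * H) 0,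
    sum_congr rfl fun j hj => by rw [hlaw j hj], sum_range_max_zero_mul hthreshold]
  simp only [hpayoff, add_mul, mul_assoc _ (_ - _), sum_add_distrib, ← mul_sum]
  rw [sum_Icc_mul_sub_mul_binomialWeight hk1 hkN]
  simp only [binomialWeight, Nat.sub_sub_sub_cancel_right hk1]
  field_simp
  ring

/-- Piece-wise expected loss under the endogenous binomial distribution:
if `ξ = (N - t)L + tH` with `t ~ Binomial(N, 1-β)` and `k` is such that
`(N-t)L + tH > 0` iff `t ≥ k`, then
`E[ξ⁺] = Nσ√(β(1-β))·C(N-1,k-1)(1-β)^{k-1}β^{N-k} + Nμ·Σ_{t=k}^N C(N,t)β^{N-t}(1-β)^t`. -/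
theorem expected_loss_piecewise {Ω : Type*} [MeasureSpace Ω]
    [IsProbabilityMeasure (ℙ : Measure Ω)]
    (N k : ℕ) (hN : 1 ≤ N) (hk1 : 1 ≤ k) (hkN : k ≤ N)
    (β μ σ : ℝ) (hβ0 : 0 < β) (hβ1 : β < 1) (hσ : 0 < σ)
    (t : Ω → ℕ) (hmeas : Measurable t) (htN : ∀ ω, t ω ≤ N)
    (hbin : ∀ j : ℕ, j ≤ N →
      ℙ {ω | t ω = j} = ENNReal.ofReal ((N.choose j : ℝ) * β ^ (N - j) * (1 - β) ^ j))
    (L H : ℝ)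
    (hL : L = μ - σ * Real.sqrt ((1 - β) / β))
    (hH : H = μ + σ * Real.sqrt (β / (1 - β)))
    (hthreshold : ∀ j : ℕ, j ≤ N → (0 < ((N : ℝ) - j) * L + j * H ↔ k ≤ j)) :
    ∫ ω, max (((N : ℝ) - t ω) * L + (t ω : ℝ) * H) 0 ∂ℙ
      = N * σ * Real.sqrt (β * (1 - β)) *
          ((N - 1).choose (k - 1) : ℝ) * (1 - β) ^ (k - 1) * β ^ (N - k)
        + N * μ * ∑ j ∈ Finset.Icc k N,
            (N.choose j : ℝ) * β ^ (N - j) * (1 - β) ^ j :=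
  expected_loss_piecewise_general N k hk1 hkN β μ σ hβ0 hβ1 t hmeas htN hbin L H hL hH hthreshold
end

section
/- With μ = 0 and T*(k) as defined, max_{1 ≤ k ≤ N} T*(k) = T*(1) = T*(N) = Nσ·(1 - 1/(2N))^{N-1}·sqrt((1/(2N))·(1 - 1/(2N))). In particular, if each Xₙ is a two-point variable with β = Pr(Xₙ ≤ 0), mean 0, and variance σ², then E[ξ⁺] ≤ Nσ(1 - 1/(2N))^{N-1}·sqrt((1/(2N))(1 - 1/(2N))). -/
open MeasureTheory ProbabilityTheory Real

/-- The local optimal value `T*(k)` of the piece-wise objective with zero mean. -/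
noncomputable def Tstar (N : ℕ) (σ : ℝ) (k : ℕ) : ℝ :=
  N * σ * ((N - 1).choose (k - 1) : ℝ)
    * ((2 * (k : ℝ) - 1) / (2 * N)) ^ (k - 1)
    * ((2 * (N : ℝ) - 2 * k + 1) / (2 * N)) ^ (N - k)
    * Real.sqrt (((2 * (k : ℝ) - 1) / (2 * N)) * ((2 * (N : ℝ) - 2 * k + 1) / (2 * N)))

/-!
Write `N = m + j + 1` and `k = m + 1`. Up to a factor depending only on `N` and `σ`, `T*(k)²` is
`C(m+j, m)² (2m+1)^(2m+1) (2j+1)^(2j+1)`, which for fixed `m + j` is largest at `m = 0`: by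
induction on `m`, the step reduces to the monotonicity of `(x+2) log(x+2) - x log x - 2 log(x+1)`,
whose derivative `log((x+2)/x) - 2/(x+1)` is nonnegative by the series of `log((1+t)/(1-t))`.

For the expected loss, let `p = P(Xₙ = H)`. Mean zero and variance `σ²` force `L = -(H-L) p`
and `σ = (H-L) √(p(1-p))`, so `E[ξ⁺] = (H-L) E[(B - Np)⁺]` with `B ~ Bin(N, p)`. De Moivre's
telescoping identity gives `E[(B - Np)⁺] = ν C(N,ν) p^ν (1-p)^(N+1-ν)` with `ν = ⌊Np⌋ + 1`, and
maximizing `p^(2ν-1) (1-p)^(2N-2ν+1)` at `p = (2ν-1)/(2N)` bounds `E[ξ⁺]` by `T*(ν) ≤ T*(1)`.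
-/

open Finset

theorem two_mul_le_log_one_add_sub_log_one_sub {t : ℝ} (ht₀ : 0 ≤ t) (ht₁ : t < 1) :
    2 * t ≤ log (1 + t) - log (1 - t) := by
  have hsum := hasSum_log_sub_log_of_abs_lt_one (abs_lt.2 ⟨by linarith, ht₁⟩)
  simpa using le_hasSum hsum 0 fun k _ => by positivity

theorem monotoneOn_add_two_mul_log_sub_mul_log :
    MonotoneOn (fun x : ℝ => (x + 2) * log (x + 2) - x * log x - 2 * log (x + 1)) (Set.Ioi 0) := by
  have hderiv : ∀ x ∈ Set.Ioi (0 : ℝ), HasDerivAt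
      (fun x : ℝ => (x + 2) * log (x + 2) - x * log x - 2 * log (x + 1))
      (log (x + 2) - log x - 2 / (x + 1)) x := by
    intro x (hx : 0 < x)
    have hlog : ∀ c : ℝ, 0 < x + c → HasDerivAt (fun y => (y + c) * log (y + c))
        (log (x + c) + 1) x := fun c hc =>
      (((hasDerivAt_id' x).add_const c).fun_mul (((hasDerivAt_id' x).add_const c).log
        hc.ne')).congr_deriv (by field_simp)
    have h₀ := hlog 0 (by simpa using hx)
    simp only [add_zero] at h₀
    exact (((hlog 2 (by positivity)).fun_sub h₀).fun_sub
      ((((hasDerivAt_id' x).add_const 1).log (by positivity)).const_mul 2)).congr_deriv (by ring)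
  refine monotoneOn_of_hasDerivWithinAt_nonneg (convex_Ioi 0)
    (fun x hx => (hderiv x hx).continuousAt.continuousWithinAt)
    (fun x hx => (hderiv x (interior_subset hx)).hasDerivWithinAt) fun x hx => ?_
  rw [interior_Ioi] at hx
  have hx : 0 < x := hx
  have hseries := two_mul_le_log_one_add_sub_log_one_sub (t := 1 / (x + 1)) (by positivity)
    (by rw [div_lt_one (by positivity)]; linarith)
  have h₁ : 1 + 1 / (x + 1) = (x + 2) / (x + 1) := by field_simp; ring
  have h₂ : 1 - 1 / (x + 1) = x / (x + 1) := by field_simp; ring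
  rw [h₁, h₂, log_div (by positivity) (by positivity), log_div hx.ne' (by positivity),
    mul_one_div] at hseries
  linarith

theorem pow_self_mul_sq_le_of_le {a s : ℕ} (ha : 0 < a) (has : a ≤ s) :
    (s : ℝ) ^ s * (s + 1) ^ 2 * (a + 2) ^ (a + 2) ≤ (s + 2) ^ (s + 2) * (a + 1) ^ 2 * a ^ a := by
  have ha' : (0 : ℝ) < a := by exact_mod_cast ha
  have has' : (a : ℝ) ≤ s := by exact_mod_cast has
  have hs' : (0 : ℝ) < s := ha'.trans_le has'
  have hmono := monotoneOn_add_two_mul_log_sub_mul_log ha' hs' has'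
  rw [← log_le_log_iff (by positivity) (by positivity)]
  simp (disch := positivity) only [log_mul, log_pow]
  push_cast
  linarith

theorem choose_sq_mul_pow_le (m j : ℕ) :
    ((m + j).choose m : ℝ) ^ 2 * (2 * m + 1) ^ (2 * m + 1) * (2 * j + 1) ^ (2 * j + 1)
      ≤ (2 * (m + j) + 1) ^ (2 * (m + j) + 1) := by
  induction m with
  | zero => simp
  | succ m ih =>
    -- With `a = 2m+1` and `s = 2(m+j)+1`, the step `m → m+1` multiplies the left side by
    -- `((s+1)/(a+1))² (a+2)^(a+2) / a^a` and the right side by `(s+2)^(s+2) / s^s`.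
    have hratio := pow_self_mul_sq_le_of_le (a := 2 * m + 1) (s := 2 * (m + j) + 1) (by omega)
      (by omega)
    have hchoose := Nat.add_one_mul_choose_eq (m + j) m
    rw [show m + j + 1 = m + 1 + j by omega] at hchoose
    set c : ℝ := ((m + j).choose m : ℝ)
    set c' : ℝ := ((m + 1 + j).choose (m + 1) : ℝ)
    have hc : c' * (2 * m + 2) = c * (2 * (m + j) + 2) := by
      have := congrArg (fun n : ℕ => 2 * (n : ℝ)) hchoose
      push_cast at this
      linear_combination -this
    rw [show 2 * (m + 1) + 1 = 2 * m + 1 + 2 by ring,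
      show 2 * (m + 1 + j) + 1 = 2 * (m + j) + 1 + 2 by ring]
    push_cast at hratio ⊢
    set a : ℝ := 2 * m + 1
    set s : ℝ := 2 * (m + j) + 1
    set J : ℝ := (2 * j + 1) ^ (2 * j + 1)
    have hP : 0 < (a + 1) ^ 2 * a ^ (2 * m + 1) := by positivity
    refine le_of_mul_le_mul_right ?_ hP
    calc c' ^ 2 * (2 * (m + 1) + 1) ^ (2 * m + 1 + 2) * J * ((a + 1) ^ 2 * a ^ (2 * m + 1))
        = c ^ 2 * a ^ (2 * m + 1) * J * ((s + 1) ^ 2 * (a + 2) ^ (2 * m + 1 + 2)) := by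
          rw [show 2 * ((m : ℝ) + 1) + 1 = a + 2 by ring]
          linear_combination (a ^ (2 * m + 1) * J * (a + 2) ^ (2 * m + 1 + 2)
            * (c' * (a + 1) + c * (s + 1))) * hc
      _ ≤ s ^ (2 * (m + j) + 1) * ((s + 1) ^ 2 * (a + 2) ^ (2 * m + 1 + 2)) := by gcongr
      _ ≤ _ := by
          rw [show 2 * ((m : ℝ) + 1 + j) + 1 = s + 2 by ring]
          linarith

theorem pow_mul_one_sub_pow_le {a b : ℕ} (ha : 0 < a) (hb : 0 < b) {t : ℝ} (ht₀ : 0 < t)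
    (ht₁ : t < 1) : t ^ a * (1 - t) ^ b ≤ (a / (a + b)) ^ a * (b / (a + b)) ^ b := by
  have hab : (0 : ℝ) < a + b := by positivity
  set α : ℝ := a / (a + b) with hα_def
  have hα : 0 < α := by positivity
  have hβ : 1 - α = b / (a + b) := by rw [hα_def]; field_simp; ring
  have hβ₀ : 0 < 1 - α := by rw [hβ]; positivity
  have ht : 0 < 1 - t := by linarith
  rw [← hβ, ← log_le_log_iff (by positivity) (by positivity),
    log_mul (by positivity) (by positivity), log_mul (by positivity) (by positivity)]
  simp only [log_pow]
  have gibbs : a * (log t - log α) + b * (log (1 - t) - log (1 - α)) ≤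
      a * (t / α - 1) + b * ((1 - t) / (1 - α) - 1) := by
    rw [← log_div ht₀.ne' hα.ne', ← log_div ht.ne' hβ₀.ne']
    gcongr <;> exact log_le_sub_one_of_pos (by positivity)
  have hzero : a * (t / α - 1) + b * ((1 - t) / (1 - α) - 1) = 0 := by
    rw [hβ, hα_def]
    field_simp
    ring
  linarith

theorem sq_pow_mul_pow_mul_sqrt {x y : ℝ} (hx : 0 ≤ x) (hy : 0 ≤ y) (m j : ℕ) :
    (x ^ m * y ^ j * √(x * y)) ^ 2 = x ^ (2 * m + 1) * y ^ (2 * j + 1) := by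
  rw [mul_pow, sq_sqrt (mul_nonneg hx hy)]
  ring

theorem Tstar_add_add_one (m j : ℕ) (σ : ℝ) :
    Tstar (m + j + 1) σ (m + 1) = (m + j + 1) * σ * (m + j).choose m
      * (((2 * m + 1) / (2 * (m + j + 1))) ^ m * ((2 * j + 1) / (2 * (m + j + 1))) ^ j
        * √((2 * m + 1) / (2 * (m + j + 1)) * ((2 * j + 1) / (2 * (m + j + 1))))) := by
  rw [Tstar, show m + j + 1 - 1 = m + j by omega, show m + j + 1 - (m + 1) = j by omega,
    Nat.add_sub_cancel]
  push_cast
  ring_nf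

theorem Tstar_add_add_one_sq (m j : ℕ) (σ : ℝ) :
    Tstar (m + j + 1) σ (m + 1) ^ 2 = ((m + j + 1) * σ) ^ 2
      * ((m + j).choose m ^ 2 * (2 * m + 1) ^ (2 * m + 1) * (2 * j + 1) ^ (2 * j + 1))
      / (2 * (m + j + 1)) ^ (2 * (m + j + 1)) := by
  rw [Tstar_add_add_one, mul_pow, sq_pow_mul_pow_mul_sqrt (by positivity) (by positivity), div_pow,
    div_pow, show 2 * (m + j + 1) = (2 * m + 1) + (2 * j + 1) by ring, pow_add]
  generalize (2 : ℝ) * (m + j + 1) = D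
  ring

theorem Tstar_nonneg {N k : ℕ} (hk : 1 ≤ k) (hkN : k ≤ N) {σ : ℝ} (hσ : 0 ≤ σ) :
    0 ≤ Tstar N σ k := by
  obtain ⟨m, rfl⟩ := Nat.exists_eq_add_of_le' hk
  obtain ⟨j, rfl⟩ := Nat.exists_eq_add_of_le hkN
  rw [add_right_comm, Tstar_add_add_one]
  positivity

theorem Tstar_le_Tstar_one {N k : ℕ} (hk : 1 ≤ k) (hkN : k ≤ N) {σ : ℝ} (hσ : 0 ≤ σ) :
    Tstar N σ k ≤ Tstar N σ 1 := by
  obtain ⟨m, rfl⟩ := Nat.exists_eq_add_of_le' hk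
  obtain ⟨j, rfl⟩ := Nat.exists_eq_add_of_le hkN
  rw [← sq_le_sq₀ (Tstar_nonneg hk hkN hσ) (Tstar_nonneg le_rfl (by omega) hσ), add_right_comm,
    Tstar_add_add_one_sq, show m + j + 1 = 0 + (m + j) + 1 by ring, Tstar_add_add_one_sq]
  have hcomb := choose_sq_mul_pow_le m j
  simp only [Nat.cast_zero, zero_add, Nat.choose_zero_right, mul_zero, Nat.cast_one, one_pow,
    one_mul, pow_one] at hcomb ⊢
  push_cast at hcomb ⊢
  gcongr _ * ?_ / _

theorem le_Tstar_add_add_one (m j : ℕ) {σ p : ℝ} (hσ : 0 ≤ σ) (hp₀ : 0 < p) (hp₁ : p < 1) :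
    (m + j + 1) * σ * (m + j).choose m * (p ^ m * (1 - p) ^ j * √(p * (1 - p)))
      ≤ Tstar (m + j + 1) σ (m + 1) := by
  rw [Tstar_add_add_one]
  gcongr _ * ?_
  rw [← sq_le_sq₀ (by bound) (by positivity), sq_pow_mul_pow_mul_sqrt hp₀.le (by linarith),
    sq_pow_mul_pow_mul_sqrt (by positivity) (by positivity)]
  refine (pow_mul_one_sub_pow_le (a := 2 * m + 1) (b := 2 * j + 1) (by omega) (by omega) hp₀
    hp₁).trans_eq ?_
  push_cast
  ring

theorem Tstar_one {N : ℕ} (hN : 1 ≤ N) (σ : ℝ) :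
    Tstar N σ 1 = N * σ * (1 - 1 / (2 * N)) ^ (N - 1) * √((1 / (2 * N)) * (1 - 1 / (2 * N))) := by
  obtain ⟨n, rfl⟩ := Nat.exists_eq_add_of_le' hN
  have h := Tstar_add_add_one 0 n σ
  simp only [zero_add, Nat.choose_zero_right, pow_zero, one_mul] at h
  rw [h]
  push_cast
  field_simp
  ring_nf

theorem Tstar_one_eq_Tstar_self {N : ℕ} (hN : 1 ≤ N) (σ : ℝ) : Tstar N σ 1 = Tstar N σ N := by
  obtain ⟨n, rfl⟩ := Nat.exists_eq_add_of_le' hN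
  have h₁ := Tstar_add_add_one 0 n σ
  have h₂ := Tstar_add_add_one n 0 σ
  simp only [zero_add, add_zero, Nat.choose_zero_right, Nat.choose_self] at h₁ h₂
  rw [h₁, h₂]
  push_cast
  ring_nf

theorem sum_Ico_sub_mul_choose_mul_pow {N m : ℕ} (hm : m ≤ N + 1) (p : ℝ) :
    ∑ j ∈ Ico m (N + 1), (j - N * p) * (N.choose j * p ^ j * (1 - p) ^ (N - j))
      = m * N.choose m * p ^ m * (1 - p) ^ (N + 1 - m) := by
  set f : ℕ → ℝ := fun j => j * N.choose j * p ^ j * (1 - p) ^ (N + 1 - j)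
  have hterm : ∀ j ∈ Ico m (N + 1),
      (j - N * p) * (N.choose j * p ^ j * (1 - p) ^ (N - j)) = -(f (j + 1) - f j) := by
    intro j hj
    have hjN : j ≤ N := Nat.lt_succ_iff.1 (mem_Ico.1 hj).2
    have hchoose : (N.choose (j + 1) : ℝ) * (j + 1) = N.choose j * (N - j) := by
      have := congrArg (Nat.cast : ℕ → ℝ) (Nat.choose_succ_right_eq N j)
      push_cast [Nat.cast_sub hjN] at this
      exact this
    simp only [f, show N + 1 - j = N - j + 1 by omega, Nat.add_sub_add_right]
    push_cast
    linear_combination (p ^ j * p * (1 - p) ^ (N - j)) * hchoose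
  rw [sum_congr rfl hterm, sum_neg_distrib, sum_Ico_sub f hm]
  simp [f, Nat.choose_succ_self]

theorem sum_max_sub_mul_choose_mul_pow (N : ℕ) {p : ℝ} (hp₀ : 0 ≤ p) (hp₁ : p ≤ 1) :
    ∑ j ∈ range (N + 1), max (j - N * p) 0 * (N.choose j * p ^ j * (1 - p) ^ (N - j))
      = (⌊N * p⌋₊ + 1) * N.choose (⌊N * p⌋₊ + 1) * p ^ (⌊N * p⌋₊ + 1)
        * (1 - p) ^ (N - ⌊N * p⌋₊) := by
  have hNp : 0 ≤ (N : ℝ) * p := by positivity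
  have hfloor : ⌊N * p⌋₊ ≤ N := Nat.floor_le_of_le (mul_le_of_le_one_right N.cast_nonneg hp₁)
  have hfilter :
      (range (N + 1)).filter (fun j : ℕ => (N * p : ℝ) < j) = Ico (⌊N * p⌋₊ + 1) (N + 1) := by
    ext j
    rw [mem_filter, mem_range, mem_Ico, ← Nat.floor_lt hNp]
    omega
  have hmax : ∀ j : ℕ, max ((j : ℝ) - N * p) 0 = if (N * p : ℝ) < j then (j : ℝ) - N * p else 0 :=
    fun j => by
      split_ifs with h
      · exact max_eq_left (by linarith)
      · exact max_eq_right (by linarith)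
  simp_rw [hmax, ite_mul, zero_mul]
  rw [← sum_filter, hfilter, sum_Ico_sub_mul_choose_mul_pow (by omega), Nat.add_sub_add_right,
    Nat.cast_succ]

theorem mul_sum_max_sub_mul_choose_mul_pow_le_Tstar_one {N : ℕ} (hN : 1 ≤ N) {p D : ℝ}
    (hp₀ : 0 < p) (hp₁ : p < 1) (hD : 0 ≤ D) :
    D * ∑ j ∈ range (N + 1), max (j - N * p) 0 * (N.choose j * p ^ j * (1 - p) ^ (N - j))
      ≤ Tstar N (D * √(p * (1 - p))) 1 := by
  have hfloor : ⌊N * p⌋₊ < N :=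
    (Nat.floor_lt (by positivity)).2 (mul_lt_of_lt_one_right (by exact_mod_cast hN) hp₁)
  rw [sum_max_sub_mul_choose_mul_pow N hp₀.le hp₁.le]
  generalize ⌊(N : ℝ) * p⌋₊ = m at hfloor ⊢
  obtain ⟨j, rfl⟩ := Nat.exists_eq_add_of_lt hfloor
  have hchoose : ((m + j + 1).choose (m + 1) : ℝ) * (m + 1) = (m + j + 1) * (m + j).choose m := by
    exact_mod_cast (Nat.add_one_mul_choose_eq (m + j) m).symm
  have hsqrt : √(p * (1 - p)) * √(p * (1 - p)) = p * (1 - p) :=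
    mul_self_sqrt (mul_nonneg hp₀.le (by linarith))
  calc D * ((m + 1) * (m + j + 1).choose (m + 1) * p ^ (m + 1) * (1 - p) ^ (m + j + 1 - m))
      = (m + j + 1) * (D * √(p * (1 - p))) * (m + j).choose m
          * (p ^ m * (1 - p) ^ j * √(p * (1 - p))) := by
        rw [show m + j + 1 - m = j + 1 by omega]
        linear_combination (D * p ^ (m + 1) * (1 - p) ^ (j + 1)) * hchoose
          - (D * (m + j + 1) * (m + j).choose m * p ^ m * (1 - p) ^ j) * hsqrt
    _ ≤ Tstar (m + j + 1) (D * √(p * (1 - p))) (m + 1) :=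
        le_Tstar_add_add_one m j (by positivity) hp₀ hp₁
    _ ≤ Tstar (m + j + 1) (D * √(p * (1 - p))) 1 :=
        Tstar_le_Tstar_one (by omega) (by omega) (by positivity)

theorem two_point_zero_mean {L H p σ : ℝ} (hL : L ≤ 0) (hH : 0 < H) (hσ : 0 < σ)
    (hp₀ : 0 ≤ p) (hp₁ : p ≤ 1) (hmean : (1 - p) * L + p * H = 0)
    (hvar : (1 - p) * L ^ 2 + p * H ^ 2 = σ ^ 2) :
    0 < p ∧ p < 1 ∧ L = -((H - L) * p) ∧ σ = (H - L) * √(p * (1 - p)) := by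
  have hL' : L = -((H - L) * p) := by linear_combination hmean
  have hp_pos : 0 < p := by
    rcases hp₀.eq_or_lt with rfl | h
    · nlinarith
    · exact h
  have hp_lt : p < 1 := by
    rcases hp₁.lt_or_eq with h | rfl
    · exact h
    · linarith
  refine ⟨hp_pos, hp_lt, hL', ?_⟩
  have hσ_sq : σ ^ 2 = (H - L) ^ 2 * (p * (1 - p)) := by
    rw [← hvar]
    linear_combination ((1 - p) * L + p * H) * hmean
  rw [← sqrt_sq hσ.le, hσ_sq, sqrt_mul (sq_nonneg _), sqrt_sq (by linarith)]

theorem sum_eq_card_mul_add_card_mul {ι : Type*} [Fintype ι] {x : ι → ℝ} {L H : ℝ} (hLH : L ≠ H)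
    (hx : ∀ i, x i = L ∨ x i = H) :
    ∑ i, x i = #{i | x i = H} * H + (Fintype.card ι - #{i | x i = H}) * L := by
  have hcard : (#{i | x i = H} : ℝ) + #{i | x i ≠ H} = Fintype.card ι := by
    exact_mod_cast card_filter_add_card_filter_not (s := univ) (fun i => x i = H)
  calc ∑ i, x i = ∑ i, if x i = H then H else L :=
        sum_congr rfl fun i _ => by rcases hx i with h | h <;> simp [h, hLH]
    _ = #{i | x i = H} * H + (Fintype.card ι - #{i | x i = H}) * L := by
        rw [sum_ite, sum_const, sum_const, nsmul_eq_mul, nsmul_eq_mul]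
        linear_combination L * hcard

theorem preimage_filter_eq_eq_iInter {Ω ι : Type*} [Fintype ι] [DecidableEq ι] {X : ι → Ω → ℝ}
    {L H : ℝ} (hLH : L ≠ H) (htwo : ∀ i ω, X i ω = L ∨ X i ω = H) (t : Finset ι) :
    (fun ω => ({i | X i ω = H} : Finset ι)) ⁻¹' {t} = ⋂ i, X i ⁻¹' {if i ∈ t then H else L} := by
  ext ω
  simp only [Set.mem_preimage, Set.mem_singleton_iff, Set.mem_iInter, Finset.ext_iff,
    mem_filter, mem_univ, true_and]
  refine forall_congr' fun i => ?_
  rcases htwo i ω with h | h <;> by_cases hi : i ∈ t <;> simp [h, hi, hLH, hLH.symm]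

section Integral

variable {Ω : Type*} [MeasurableSpace Ω] (μ : Measure Ω) [IsFiniteMeasure μ]

theorem integral_comp_eq_sum_measureReal_preimage {α : Type*} {S : Ω → α}
    (s : Finset α) (hS : ∀ ω, S ω ∈ s) (hmeas : ∀ a ∈ s, MeasurableSet (S ⁻¹' {a}))
    (G : α → ℝ) : ∫ ω, G (S ω) ∂μ = ∑ a ∈ s, μ.real (S ⁻¹' {a}) * G a := by
  classical
  have hfun : (fun ω => G (S ω)) = fun ω => ∑ a ∈ s, (S ⁻¹' {a}).indicator (fun _ => G a) ω := by
    funext ω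
    simp [Set.indicator_apply, hS ω]
  rw [hfun, integral_finsetSum _ fun a ha => (integrable_const _).indicator (hmeas a ha)]
  refine sum_congr rfl fun a ha => ?_
  rw [integral_indicator_const _ (hmeas a ha), smul_eq_mul]

theorem integral_comp_of_forall_eq_or_eq {Y : Ω → ℝ} (hY : Measurable Y) {a b : ℝ} (hab : a ≠ b)
    (hval : ∀ ω, Y ω = a ∨ Y ω = b) (f : ℝ → ℝ) :
    ∫ ω, f (Y ω) ∂μ = μ.real (Y ⁻¹' {a}) * f a + μ.real (Y ⁻¹' {b}) * f b := by
  classical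
  rw [integral_comp_eq_sum_measureReal_preimage μ {a, b} (by simpa using hval)
    (fun c _ => hY (measurableSet_singleton c)), sum_pair hab]

theorem integral_comp_sum_eq_sum_choose {N : ℕ} {X : Fin N → Ω → ℝ} {L H p q : ℝ} (hLH : L ≠ H)
    (hmeas : ∀ n, Measurable (X n)) (htwo : ∀ n ω, X n ω = L ∨ X n ω = H)
    (hindep : iIndepFun X μ) (hp : ∀ n, μ.real (X n ⁻¹' {H}) = p)
    (hq : ∀ n, μ.real (X n ⁻¹' {L}) = q) (g : ℝ → ℝ) :
    ∫ ω, g (∑ n, X n ω) ∂μ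
      = ∑ j ∈ range (N + 1), N.choose j * p ^ j * q ^ (N - j) * g (j * H + (N - j) * L) := by
  classical
  set S : Ω → Finset (Fin N) := fun ω => {n | X n ω = H}
  have hfiber_meas : ∀ t, MeasurableSet (S ⁻¹' {t}) := fun t => by
    rw [preimage_filter_eq_eq_iInter hLH htwo]
    exact .iInter fun n => hmeas n (measurableSet_singleton _)
  have hfiber_real : ∀ t, μ.real (S ⁻¹' {t}) = p ^ #t * q ^ (N - #t) := fun t => by
    rw [preimage_filter_eq_eq_iInter hLH htwo, measureReal_def,
      hindep.meas_iInter fun n => ⟨_, measurableSet_singleton _, rfl⟩, ENNReal.toReal_prod]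
    have hfactor : ∀ n, μ.real (X n ⁻¹' {if n ∈ t then H else L}) = if n ∈ t then p else q :=
      fun n => by split_ifs <;> simp [hp, hq]
    simp only [← measureReal_def, hfactor]
    rw [prod_ite, prod_const, prod_const, filter_mem_eq_inter, univ_inter, filter_notMem_eq_sdiff,
      ← compl_eq_univ_sdiff, card_compl, Fintype.card_fin]
  simp_rw [sum_eq_card_mul_add_card_mul hLH fun n => htwo n _, Fintype.card_fin]
  rw [integral_comp_eq_sum_measureReal_preimage μ (G := fun t => g (#t * H + (N - #t) * L))
    univ (fun _ => mem_univ _) (fun t _ => hfiber_meas t)]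
  simp only [hfiber_real]
  rw [← powerset_univ,
    sum_powerset_apply_card (fun j => p ^ j * q ^ (N - j) * g (j * H + (N - j) * L)), card_univ,
    Fintype.card_fin]
  simp only [nsmul_eq_mul, mul_assoc]

end Integral

theorem integral_max_sum_le_Tstar_one {Ω : Type*} [MeasureSpace Ω]
    [IsProbabilityMeasure (ℙ : Measure Ω)] {N : ℕ} (hN : 1 ≤ N) {σ : ℝ} (hσ : 0 < σ)
    {X : Fin N → Ω → ℝ} {L H : ℝ} (hL : L ≤ 0) (hH : 0 < H) (hmeas : ∀ n, Measurable (X n))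
    (htwo : ∀ n ω, X n ω = L ∨ X n ω = H) (hindep : iIndepFun X ℙ)
    (hident : ∀ n m, IdentDistrib (X n) (X m) ℙ ℙ) (hmean : ∀ n, ∫ ω, X n ω ∂ℙ = 0)
    (hvar : ∀ n, variance (X n) ℙ = σ ^ 2) :
    ∫ ω, max (∑ n, X n ω) 0 ∂ℙ ≤ Tstar N σ 1 := by
  have hLH : L ≠ H := (hL.trans_lt hH).ne
  set i₀ : Fin N := ⟨0, hN⟩
  set p := (ℙ : Measure Ω).real (X i₀ ⁻¹' {H})
  have hp : ∀ n, (ℙ : Measure Ω).real (X n ⁻¹' {H}) = p := fun n => by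
    simp only [measureReal_def, (hident n i₀).measure_mem_eq (measurableSet_singleton H), p]
  have hq : ∀ n, (ℙ : Measure Ω).real (X n ⁻¹' {L}) = 1 - p := fun n => by
    have h := integral_comp_of_forall_eq_or_eq ℙ (hmeas n) hLH (htwo n) fun _ => 1
    simp only [integral_const, probReal_univ, smul_eq_mul, mul_one, hp] at h
    linarith
  have hmoment : ∀ f : ℝ → ℝ, ∫ ω, f (X i₀ ω) ∂ℙ = (1 - p) * f L + p * f H := fun f => by
    rw [integral_comp_of_forall_eq_or_eq ℙ (hmeas i₀) hLH (htwo i₀) f, hq, hp]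
  have hmean₀ : (1 - p) * L + p * H = 0 := by simpa [hmean i₀] using (hmoment id).symm
  have hvar₀ : (1 - p) * L ^ 2 + p * H ^ 2 = σ ^ 2 := by
    rw [← hvar i₀, variance_eq_integral (hmeas i₀).aemeasurable, hmean i₀]
    simpa using (hmoment fun x => x ^ 2).symm
  obtain ⟨hp₀, hp₁, hL', rfl⟩ :=
    two_point_zero_mean hL hH hσ measureReal_nonneg measureReal_le_one hmean₀ hvar₀
  rw [integral_comp_sum_eq_sum_choose ℙ hLH hmeas htwo hindep hp hq fun x => max x 0]
  refine le_of_eq_of_le ?_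
    (mul_sum_max_sub_mul_choose_mul_pow_le_Tstar_one hN hp₀ hp₁ (by linarith))
  rw [mul_sum]
  refine sum_congr rfl fun j _ => ?_
  have hshift : (j : ℝ) * H + (N - j) * L = (H - L) * (j - N * p) := by
    linear_combination (N : ℝ) * hL'
  have hmax : max ((H - L) * (j - N * p)) 0 = (H - L) * max (j - N * p) 0 := by
    rw [mul_max_of_nonneg _ _ (by linarith), mul_zero]
  rw [hshift, hmax]
  ring

/-- With zero mean, `max_k T*(k) = T*(1) = T*(N) = Nσ(1 - 1/(2N))^{N-1}·√((1/(2N))(1 - 1/(2N)))`;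
consequently, for a sum of i.i.d. two-point random variables with mean `0` and
variance `σ²`, `E[ξ⁺]` is at most this value. -/
theorem Tstar_max_and_expected_loss_bound {Ω : Type*} [MeasureSpace Ω]
    [IsProbabilityMeasure (ℙ : Measure Ω)]
    (N : ℕ) (hN : 1 ≤ N) (σ : ℝ) (hσ : 0 < σ)
    (X : Fin N → Ω → ℝ) (L H : ℝ) (hL : L ≤ 0) (hH : 0 < H)
    (hmeas : ∀ n, Measurable (X n))
    (htwo : ∀ n, ∀ ω, X n ω = L ∨ X n ω = H)
    (hindep : iIndepFun X ℙ)
    (hident : ∀ n m, IdentDistrib (X n) (X m) ℙ ℙ)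
    (hmean : ∀ n, ∫ ω, X n ω ∂ℙ = 0)
    (hvar : ∀ n, variance (X n) ℙ = σ ^ 2) :
    (∀ k : ℕ, 1 ≤ k → k ≤ N → Tstar N σ k ≤ Tstar N σ 1)
      ∧ Tstar N σ 1 = Tstar N σ N
      ∧ Tstar N σ 1
          = N * σ * (1 - 1 / (2 * N)) ^ (N - 1) *
              Real.sqrt ((1 / (2 * N)) * (1 - 1 / (2 * N)))
      ∧ ∫ ω, max (∑ n, X n ω) 0 ∂ℙ
          ≤ N * σ * (1 - 1 / (2 * N)) ^ (N - 1) *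
              Real.sqrt ((1 / (2 * N)) * (1 - 1 / (2 * N))) := by
  refine ⟨fun k hk hkN => Tstar_le_Tstar_one hk hkN hσ.le, Tstar_one_eq_Tstar_self hN σ,
    Tstar_one hN σ, ?_⟩
  rw [← Tstar_one hN σ]
  exact integral_max_sum_le_Tstar_one hN hσ hL hH hmeas htwo hindep hident hmean hvar
end

section
/- Let ξ = X₁ + ... + X_N with X₁,...,X_N i.i.d., let ξ_{(i)} = ξ - X_i, and let X_i' be an independent copy of X_i. Then (ξ - ξ')(1_{ξ>0} - 1_{ξ'>0}) = (X_i - X_i')(1_{X_i + ξ_{(i)} > 0} - 1_{X_i' + ξ_{(i)} > 0}) where ξ' = ξ_{(i)} + X_i', and consequently E[ξ⁺] = E[ξ]·Pr(ξ > 0) + (N/2)·E[(X_i - X_i')(1_{X_i + ξ_{(i)} > 0} - 1_{X_i' + ξ_{(i)} > 0})]. -/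
open MeasureTheory ProbabilityTheory Real

/-! Write `S = ξ - Xᵢ` and `φ = 1_{(0,∞)}`. Since `X'` is independent of `(Xᵢ, S)` and `Xᵢ`
of `S`, the triples `(Xᵢ, X', S)` and `(X', Xᵢ, S)` have the same law, so the Korkine term
`E[(Xᵢ - X')(φ(Xᵢ + S) - φ(X' + S))]` equals `2 (E[Xᵢ φ(ξ)] - E[X' φ(ξ)])`. Independence
gives `E[X' φ(ξ)] = E[Xᵢ] Pr(ξ > 0)`, and exchangeability of the i.i.d. family gives
`N E[Xᵢ φ(ξ)] = E[ξ φ(ξ)] = E[ξ⁺]`; as `E[ξ] = N E[Xᵢ]`, the two sides agree. -/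

lemma max_zero_eq_mul_ite_pos (t : ℝ) : max t 0 = t * if 0 < t then 1 else 0 := by
  split_ifs with ht
  · rw [mul_one, max_eq_left ht.le]
  · rw [mul_zero, max_eq_right (not_lt.1 ht)]

lemma abs_ite_pos_le_one (t : ℝ) : |if 0 < t then (1 : ℝ) else 0| ≤ 1 := by
  split_ifs <;> simp

lemma measurable_ite_pos : Measurable fun t : ℝ => if 0 < t then (1 : ℝ) else 0 :=
  Measurable.ite measurableSet_Ioi measurable_const measurable_const

lemma measurePreserving_prod_left_comm {α β γ : Type*} [MeasurableSpace α] [MeasurableSpace β]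
    [MeasurableSpace γ] (μ : Measure α) (ν : Measure β) (ρ : Measure γ) [SigmaFinite μ]
    [SigmaFinite ν] [SigmaFinite ρ] :
    MeasurePreserving (fun p : α × β × γ => (p.2.1, p.1, p.2.2))
      (μ.prod (ν.prod ρ)) (ν.prod (μ.prod ρ)) :=
  ((measurePreserving_prodAssoc ν μ ρ).comp
    ((Measure.measurePreserving_swap (μ := μ) (ν := ν)).prod (MeasurePreserving.id ρ))).comp
    (measurePreserving_prodAssoc μ ν ρ).symm

section

variable {Ω : Type*} [MeasurableSpace Ω] {μ : Measure Ω}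

lemma integral_ite_pos {f : Ω → ℝ} (hf : AEMeasurable f μ) :
    ∫ ω, (if 0 < f ω then (1 : ℝ) else 0) ∂μ = μ.real {ω | 0 < f ω} := by
  have h : (fun ω => if 0 < f ω then (1 : ℝ) else 0) = {ω | 0 < f ω}.indicator 1 := by
    ext; simp [Set.indicator_apply]
  rw [h, integral_indicator₀ (nullMeasurableSet_lt aemeasurable_const hf)]
  simp

lemma MeasureTheory.Integrable.mul_comp_of_abs_le {f h : Ω → ℝ} {g : ℝ → ℝ} {C : ℝ}
    (hf : Integrable f μ) (hg : Measurable g) (hgC : ∀ t, |g t| ≤ C) (hh : AEMeasurable h μ) :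
    Integrable (fun ω => f ω * g (h ω)) μ :=
  hf.mul_bdd (hg.comp_aemeasurable hh).aestronglyMeasurable (ae_of_all _ fun _ => hgC _)

lemma identDistrib_swap_of_indepFun {E F : Type*} [MeasurableSpace E] [MeasurableSpace F]
    [IsFiniteMeasure μ] {U V : Ω → E} {W : Ω → F} (hW : AEMeasurable W μ)
    (hUV : IdentDistrib U V μ μ) (hUW : IndepFun U W μ)
    (hVUW : IndepFun V (fun ω => (U ω, W ω)) μ) :
    IdentDistrib (fun ω => (U ω, V ω, W ω)) (fun ω => (V ω, U ω, W ω)) μ μ := by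
  have hU := hUV.aemeasurable_fst
  have hV := hUV.aemeasurable_snd
  have hlaw :
      μ.map (fun ω => (V ω, U ω, W ω)) = (μ.map U).prod ((μ.map U).prod (μ.map W)) := by
    rw [hVUW.map_prod_eq_prod_map_map hV (hU.prodMk hW),
      hUW.map_prod_eq_prod_map_map hU hW, ← hUV.map_eq]
  have hperm := measurePreserving_prod_left_comm (μ.map U) (μ.map U) (μ.map W)
  refine ⟨hU.prodMk (hV.prodMk hW), hV.prodMk (hU.prodMk hW), ?_⟩
  rw [hlaw, ← hperm.map_eq, ← hlaw,
    AEMeasurable.map_map_of_aemeasurable hperm.measurable.aemeasurable (hV.prodMk (hU.prodMk hW))]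
  rfl

lemma integral_sub_mul_sub_of_identDistrib_swap {U V W : Ω → ℝ} {g : ℝ → ℝ} {C : ℝ}
    (hswap : IdentDistrib (fun ω => (U ω, V ω, W ω)) (fun ω => (V ω, U ω, W ω)) μ μ)
    (hU : Integrable U μ) (hV : Integrable V μ) (hW : AEMeasurable W μ)
    (hg : Measurable g) (hgC : ∀ t, |g t| ≤ C) :
    ∫ ω, (U ω - V ω) * (g (U ω + W ω) - g (V ω + W ω)) ∂μ
      = 2 * (∫ ω, U ω * g (U ω + W ω) ∂μ - ∫ ω, V ω * g (U ω + W ω) ∂μ) := by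
  have hUW : AEMeasurable (fun ω => U ω + W ω) μ := hU.aemeasurable.add hW
  have hVW : AEMeasurable (fun ω => V ω + W ω) μ := hV.aemeasurable.add hW
  have hVV : ∫ ω, V ω * g (V ω + W ω) ∂μ = ∫ ω, U ω * g (U ω + W ω) ∂μ :=
    (hswap.comp (u := fun p : ℝ × ℝ × ℝ => p.1 * g (p.1 + p.2.2)) (by fun_prop)).integral_eq.symm
  have hUV : ∫ ω, U ω * g (V ω + W ω) ∂μ = ∫ ω, V ω * g (U ω + W ω) ∂μ :=
    (hswap.comp (u := fun p : ℝ × ℝ × ℝ => p.1 * g (p.2.1 + p.2.2)) (by fun_prop)).integral_eq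
  have hUg₁ := hU.mul_comp_of_abs_le hg hgC hUW
  have hUg₂ := hU.mul_comp_of_abs_le hg hgC hVW
  have hVg₁ := hV.mul_comp_of_abs_le hg hgC hUW
  have hVg₂ := hV.mul_comp_of_abs_le hg hgC hVW
  calc ∫ ω, (U ω - V ω) * (g (U ω + W ω) - g (V ω + W ω)) ∂μ
      = ∫ ω, (U ω * g (U ω + W ω) - U ω * g (V ω + W ω))
          - (V ω * g (U ω + W ω) - V ω * g (V ω + W ω)) ∂μ := by
        congr 1 with ω
        ring
    _ = (∫ ω, U ω * g (U ω + W ω) ∂μ - ∫ ω, U ω * g (V ω + W ω) ∂μ)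
          - (∫ ω, V ω * g (U ω + W ω) ∂μ - ∫ ω, V ω * g (V ω + W ω) ∂μ) := by
        rw [integral_sub, integral_sub hUg₁ hUg₂, integral_sub hVg₁ hVg₂]
        exacts [hUg₁.sub hUg₂, hVg₁.sub hVg₂]
    _ = 2 * (∫ ω, U ω * g (U ω + W ω) ∂μ - ∫ ω, V ω * g (U ω + W ω) ∂μ) := by
        rw [hVV, hUV]
        ring

lemma ProbabilityTheory.iIndepFun.indepFun_sum_sub {ι : Type*} [Fintype ι] {X : ι → Ω → ℝ} (hX : iIndepFun X μ)
    (hmeas : ∀ j, AEMeasurable (X j) μ) (i : ι) :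
    IndepFun (X i) (fun ω => (∑ j, X j ω) - X i ω) μ := by
  classical
  convert (hX.indepFun_finsetSum_of_notMem₀ hmeas (Finset.notMem_erase i Finset.univ)).symm
    using 1
  funext ω
  rw [Finset.sum_apply, Finset.sum_erase_eq_sub (Finset.mem_univ i)]

lemma integral_mul_comp_sum_eq_of_iIndepFun {ι : Type*} [Fintype ι] {X : ι → Ω → ℝ}
    (hX : iIndepFun X μ) (hid : ∀ j k, IdentDistrib (X j) (X k) μ μ) {g : ℝ → ℝ}
    (hg : Measurable g) (j k : ι) :
    ∫ ω, X j ω * g (∑ l, X l ω) ∂μ = ∫ ω, X k ω * g (∑ l, X l ω) ∂μ := by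
  classical
  have hperm : IdentDistrib (fun ω l => X (Equiv.swap j k l) ω) (fun ω l => X l ω) μ μ :=
    IdentDistrib.pi (fun l => hid _ l) (hX.precomp (Equiv.swap j k).injective) hX
  have h : ∫ ω, X (Equiv.swap j k k) ω * g (∑ l, X (Equiv.swap j k l) ω) ∂μ
      = ∫ ω, X k ω * g (∑ l, X l ω) ∂μ :=
    (hperm.comp ((measurable_pi_apply k).mul
      (hg.comp (Finset.measurable_sum Finset.univ fun l _ => measurable_pi_apply l)))).integral_eq
  have hsum (ω : Ω) : ∑ l, X (Equiv.swap j k l) ω = ∑ l, X l ω := Equiv.sum_comp _ (X · ω)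
  simpa only [Equiv.swap_apply_right, hsum] using h

lemma integral_sum_mul_comp_sum {ι : Type*} [Fintype ι] {X : ι → Ω → ℝ}
    (hX : iIndepFun X μ) (hid : ∀ j k, IdentDistrib (X j) (X k) μ μ)
    (hint : ∀ j, Integrable (X j) μ) {g : ℝ → ℝ} {C : ℝ} (hg : Measurable g)
    (hgC : ∀ t, |g t| ≤ C) (k : ι) :
    ∫ ω, (∑ l, X l ω) * g (∑ l, X l ω) ∂μ
      = Fintype.card ι * ∫ ω, X k ω * g (∑ l, X l ω) ∂μ := by
  have hsum : AEMeasurable (fun ω => ∑ l, X l ω) μ :=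
    Finset.aemeasurable_fun_sum _ fun l _ => (hint l).aemeasurable
  simp_rw [Finset.sum_mul]
  rw [integral_finsetSum _ fun l _ => (hint l).mul_comp_of_abs_le hg hgC hsum]
  simp [integral_mul_comp_sum_eq_of_iIndepFun hX hid hg _ k]

end

theorem korkine_decomposition_sum_general {Ω : Type*} [MeasureSpace Ω]
    [IsProbabilityMeasure (ℙ : Measure Ω)]
    (N : ℕ) (X : Fin N → Ω → ℝ) (X' : Ω → ℝ) (i : Fin N)
    (hL2 : ∀ n, MemLp (X n) 2 ℙ)
    (hindep : iIndepFun X ℙ)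
    (hident : ∀ n, IdentDistrib (X n) (X i) ℙ ℙ)
    (hident' : IdentDistrib X' (X i) ℙ ℙ)
    (hindep' : IndepFun X' (fun ω => (fun n => X n ω)) ℙ) :
    (∀ ω : Ω,
      ((∑ n, X n ω) - ((∑ n, X n ω) - X i ω + X' ω)) *
          ((if 0 < ∑ n, X n ω then (1 : ℝ) else 0)
            - (if 0 < (∑ n, X n ω) - X i ω + X' ω then (1 : ℝ) else 0))
        = (X i ω - X' ω) *
          ((if 0 < X i ω + ((∑ n, X n ω) - X i ω) then (1 : ℝ) else 0)
            - (if 0 < X' ω + ((∑ n, X n ω) - X i ω) then (1 : ℝ) else 0)))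
    ∧ ∫ ω, max (∑ n, X n ω) 0 ∂ℙ
        = (∫ ω, (∑ n, X n ω) ∂ℙ) * (ℙ {ω | 0 < ∑ n, X n ω}).toReal
          + (N / 2 : ℝ) * ∫ ω, (X i ω - X' ω) *
              ((if 0 < X i ω + ((∑ n, X n ω) - X i ω) then (1 : ℝ) else 0)
                - (if 0 < X' ω + ((∑ n, X n ω) - X i ω) then (1 : ℝ) else 0)) ∂ℙ := by
  refine ⟨fun ω => by rw [add_sub_cancel, add_comm (X' ω)]; ring, ?_⟩
  have hint (n : Fin N) : Integrable (X n) ℙ := (hL2 n).integrable one_le_two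
  have hint' : Integrable X' ℙ := hident'.integrable_iff.2 (hint i)
  have hmeas_sum : Measurable fun v : Fin N → ℝ => ∑ n, v n :=
    Finset.measurable_sum _ fun n _ => measurable_pi_apply n
  have hξ : AEMeasurable (fun ω => ∑ n, X n ω) ℙ :=
    Finset.aemeasurable_fun_sum _ fun n _ => (hint n).aemeasurable
  have hS : AEMeasurable (fun ω => (∑ n, X n ω) - X i ω) ℙ := hξ.sub (hint i).aemeasurable
  have hX'iS : IndepFun X' (fun ω => (X i ω, (∑ n, X n ω) - X i ω)) ℙ :=
    hindep'.comp measurable_id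
      ((measurable_pi_apply i).prodMk (hmeas_sum.sub (measurable_pi_apply i)))
  have hkork := integral_sub_mul_sub_of_identDistrib_swap
    (identDistrib_swap_of_indepFun hS hident'.symm
      (hindep.indepFun_sum_sub (fun n => (hint n).aemeasurable) i) hX'iS) (hint i) hint' hS
    measurable_ite_pos abs_ite_pos_le_one
  have hexch := integral_sum_mul_comp_sum hindep (fun j k => (hident j).trans (hident k).symm)
    hint measurable_ite_pos abs_ite_pos_le_one i
  have hX'ξ : ∫ ω, X' ω * (if 0 < ∑ n, X n ω then 1 else 0) ∂ℙ
      = (∫ ω, X i ω ∂ℙ) * (ℙ : Measure Ω).real {ω | 0 < ∑ n, X n ω} := by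
    have hX'φ : IndepFun X' (fun ω => if 0 < ∑ n, X n ω then (1 : ℝ) else 0) ℙ :=
      hindep'.comp measurable_id (measurable_ite_pos.comp hmeas_sum)
    rw [← hident'.integral_eq, ← integral_ite_pos hξ]
    exact hX'φ.integral_fun_mul_eq_mul_integral hint'.aestronglyMeasurable
      (measurable_ite_pos.comp_aemeasurable hξ).aestronglyMeasurable
  have hmean : ∫ ω, ∑ n, X n ω ∂ℙ = N * ∫ ω, X i ω ∂ℙ := by
    simp [integral_finsetSum _ fun n _ => hint n, (hident _).integral_eq]
  simp only [add_sub_cancel, max_zero_eq_mul_ite_pos, Fintype.card_fin] at hkork hexch ⊢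
  rw [hkork, hexch, hX'ξ, hmean, ← measureReal_def]
  ring

/-- Multivariate Korkine decomposition: with `ξ = Σ Xₙ`, `ξ₍ᵢ₎ = ξ - Xᵢ`,
and `X'` an independent copy of `Xᵢ`, setting `ξ' = ξ₍ᵢ₎ + X'`, the pointwise
identity `(ξ - ξ')(1_{ξ>0} - 1_{ξ'>0}) = (Xᵢ - X')(1_{Xᵢ+ξ₍ᵢ₎>0} - 1_{X'+ξ₍ᵢ₎>0})`
holds, and `E[ξ⁺] = E[ξ]·Pr(ξ > 0) + (N/2)·E[(Xᵢ - X')(1_{Xᵢ+ξ₍ᵢ₎>0} - 1_{X'+ξ₍ᵢ₎>0})]`. -/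
theorem korkine_decomposition_sum {Ω : Type*} [MeasureSpace Ω]
    [IsProbabilityMeasure (ℙ : Measure Ω)]
    (N : ℕ) (hN : 1 ≤ N) (X : Fin N → Ω → ℝ) (X' : Ω → ℝ) (i : Fin N)
    (hmeas : ∀ n, Measurable (X n)) (hmeas' : Measurable X')
    (hL2 : ∀ n, MemLp (X n) 2 ℙ) (hL2' : MemLp X' 2 ℙ)
    (hindep : iIndepFun X ℙ)
    (hident : ∀ n, IdentDistrib (X n) (X i) ℙ ℙ)
    (hident' : IdentDistrib X' (X i) ℙ ℙ)
    (hindep' : IndepFun X' (fun ω => (fun n => X n ω)) ℙ) :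
    (∀ ω : Ω,
      ((∑ n, X n ω) - ((∑ n, X n ω) - X i ω + X' ω)) *
          ((if 0 < ∑ n, X n ω then (1 : ℝ) else 0)
            - (if 0 < (∑ n, X n ω) - X i ω + X' ω then (1 : ℝ) else 0))
        = (X i ω - X' ω) *
          ((if 0 < X i ω + ((∑ n, X n ω) - X i ω) then (1 : ℝ) else 0)
            - (if 0 < X' ω + ((∑ n, X n ω) - X i ω) then (1 : ℝ) else 0)))
    ∧ ∫ ω, max (∑ n, X n ω) 0 ∂ℙ
        = (∫ ω, (∑ n, X n ω) ∂ℙ) * (ℙ {ω | 0 < ∑ n, X n ω}).toReal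
          + (N / 2 : ℝ) * ∫ ω, (X i ω - X' ω) *
              ((if 0 < X i ω + ((∑ n, X n ω) - X i ω) then (1 : ℝ) else 0)
                - (if 0 < X' ω + ((∑ n, X n ω) - X i ω) then (1 : ℝ) else 0)) ∂ℙ :=
  korkine_decomposition_sum_general N X X' i hL2 hindep hident hident' hindep'
end
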